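/- arXiv:1508.06571 — 7 statements merged into one kernel-verified Lean document; each statement's English description precedes it below -/
import Mathlib

section
/- Let α ∈ (0,1), z₀ = z ∈ (0,1], and define z_{r} recursively by z_r = z_{r+1}(1 + 2^α z_{r+1}^α), i.e. z_{r+1} = E_α^{-1}(z_r) where E_α(x) = x(1+2^α x^α) on [0,1/2]. Then for all r ≥ 1: 1/(z₀^{−α} + r·α·2^α) ≤ z_r^α ≤ 1/(z₀^{−α} + r·α(1−α)·2^{α−1}). -/
/-!
Put `u_r = z_r ^ (-α)`. Writing `z_r = y (1 + t)` with `y = z_{r+1}` and `t = (2y)^α ∈ (0, 1]`,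
one has `u_{r+1} - u_r = 2^α (1 - (1 + t)^(-α)) / t`, and Bernoulli's inequality pins this
increment between `α 2^(α-1)` and `α 2^α`. Summing the increments bounds `u_r` linearly in `r`,
and inverting gives the bounds on `z_r ^ α`.
-/

/-- Left branch of the LSV (Pomeau–Manneville type) map. -/
noncomputable def Ea (α x : ℝ) : ℝ := x * (1 + 2 ^ α * x ^ α)

open Real Set

lemma one_sub_one_add_rpow_neg_le {α t : ℝ} (hα0 : 0 ≤ α) (hα1 : α ≤ 1) (ht : -1 < t) :
    1 - (1 + t) ^ (-α) ≤ α * t := by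
  have h1t : 0 < 1 + t := by linarith
  have hαt : 0 < 1 + α * t := by
    rcases hα0.eq_or_lt with rfl | hα_pos
    · simp
    · nlinarith [mul_pos hα_pos h1t]
  have hbern : (1 + t) ^ α ≤ 1 + α * t := rpow_one_add_le_one_add_mul_self ht.le hα0 hα1
  have hinv : (1 + α * t)⁻¹ ≤ (1 + t) ^ (-α) := by
    rw [rpow_neg h1t.le]
    exact inv_anti₀ (rpow_pos_of_pos h1t α) hbern
  have hrecip : 1 - α * t ≤ (1 + α * t)⁻¹ := by
    rw [← one_div, le_div_iff₀ hαt]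
    nlinarith [sq_nonneg (α * t)]
  linarith

lemma mul_div_one_add_le_one_sub_one_add_rpow_neg {α t : ℝ} (hα0 : 0 ≤ α) (hα1 : α ≤ 1)
    (ht : -1 < t) : α * t / (1 + t) ≤ 1 - (1 + t) ^ (-α) := by
  have h1t : 0 < 1 + t := by linarith
  have hbern : (1 + t) ^ (1 - α) ≤ 1 + (1 - α) * t :=
    rpow_one_add_le_one_add_mul_self ht.le (by linarith) (by linarith)
  have hsplit : (1 + t) ^ (-α) = (1 + t) ^ (1 - α) / (1 + t) := by
    rw [← rpow_sub_one h1t.ne']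
    ring_nf
  have hrhs : (1 + (1 - α) * t) / (1 + t) = 1 - α * t / (1 + t) := by
    field_simp
    ring
  have := div_le_div_of_nonneg_right hbern h1t.le
  rw [hsplit]
  linarith

lemma rpow_neg_sub_rpow_neg_Ea_mem_Icc {α y : ℝ} (hα0 : 0 ≤ α) (hα1 : α ≤ 1)
    (hy : y ∈ Ioc 0 (1 / 2)) :
    y ^ (-α) - Ea α y ^ (-α) ∈ Icc (α * 2 ^ (α - 1)) (α * 2 ^ α) := by
  obtain ⟨hy0, hy_half⟩ := hy
  set t := 2 ^ α * y ^ α with ht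
  have ht_eq : t = (2 * y) ^ α := (mul_rpow zero_le_two hy0.le).symm
  have ht0 : 0 < t := by rw [ht_eq]; exact rpow_pos_of_pos (by positivity) α
  have ht1 : t ≤ 1 := by rw [ht_eq]; exact rpow_le_one (by positivity) (by linarith) hα0
  have hy_inv : y ^ (-α) = 2 ^ α / t := by
    rw [rpow_neg hy0.le, ht, div_mul_cancel_left₀ (rpow_pos_of_pos two_pos α).ne']
  have hdiff : y ^ (-α) - Ea α y ^ (-α) = 2 ^ α / t * (1 - (1 + t) ^ (-α)) := by
    rw [Ea, mul_rpow hy0.le (by positivity), hy_inv]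
    ring
  rw [hdiff]
  constructor
  · calc α * 2 ^ (α - 1) = α * 2 ^ α / 2 := by rw [rpow_sub_one two_ne_zero]; ring
      _ ≤ α * 2 ^ α / (1 + t) := by gcongr; linarith
      _ = 2 ^ α / t * (α * t / (1 + t)) := by field_simp
      _ ≤ 2 ^ α / t * (1 - (1 + t) ^ (-α)) := by
        gcongr
        exact mul_div_one_add_le_one_sub_one_add_rpow_neg hα0 hα1 (by linarith)
  · calc 2 ^ α / t * (1 - (1 + t) ^ (-α)) ≤ 2 ^ α / t * (α * t) := by
          gcongr
          exact one_sub_one_add_rpow_neg_le hα0 hα1 (by linarith)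
      _ = α * 2 ^ α := by field_simp

lemma sub_zero_mem_Icc_of_forall_succ_sub_mem_Icc {u : ℕ → ℝ} {a b : ℝ}
    (h : ∀ n, u (n + 1) - u n ∈ Icc a b) (n : ℕ) : u n - u 0 ∈ Icc (n * a) (n * b) := by
  induction n with
  | zero => simp
  | succ n ih =>
    obtain ⟨ha, hb⟩ := h n
    obtain ⟨iha, ihb⟩ := ih
    push_cast
    constructor <;> linarith

theorem stmt3_general (α z : ℝ) (hα : α ∈ Set.Ioo (0:ℝ) 1)
    (Z : ℕ → ℝ) (hZ0 : Z 0 = z)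
    (hrec : ∀ r : ℕ, Z r = Z (r + 1) * (1 + 2 ^ α * Z (r + 1) ^ α))
    (hmem : ∀ r : ℕ, 1 ≤ r → Z r ∈ Set.Ioc (0:ℝ) (1/2)) :
    ∀ r : ℕ, 1 ≤ r →
      1 / (z ^ (-α) + r * α * 2 ^ α) ≤ Z r ^ α ∧
        Z r ^ α ≤ 1 / (z ^ (-α) + r * (α * (1 - α)) * 2 ^ (α - 1)) := by
  intro r hr
  obtain ⟨hα0, hα1⟩ := hα
  subst hZ0
  have hstep : ∀ n, Z (n + 1) ^ (-α) - Z n ^ (-α) ∈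
      Icc (α * (1 - α) * 2 ^ (α - 1)) (α * 2 ^ α) := by
    intro n
    have hEa : Ea α (Z (n + 1)) = Z n := (hrec n).symm
    obtain ⟨hlo, hhi⟩ := hEa ▸
      rpow_neg_sub_rpow_neg_Ea_mem_Icc hα0.le hα1.le (hmem (n + 1) (Nat.le_add_left 1 n))
    have hweaken : α * (1 - α) * 2 ^ (α - 1) ≤ α * 2 ^ (α - 1) := by
      nlinarith [mul_pos hα0 (rpow_pos_of_pos two_pos (α - 1))]
    exact ⟨hweaken.trans hlo, hhi⟩
  obtain ⟨hlo, hhi⟩ :=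
    sub_zero_mem_Icc_of_forall_succ_sub_mem_Icc (u := fun n ↦ Z n ^ (-α)) hstep r
  have hZ0_pos : 0 < Z 0 := by
    have := (hmem 1 le_rfl).1
    rw [hrec 0]
    positivity
  have hlow_pos : 0 < Z 0 ^ (-α) + r * (α * (1 - α)) * 2 ^ (α - 1) := by
    have := rpow_pos_of_pos hZ0_pos (-α)
    have := rpow_pos_of_pos two_pos (α - 1)
    have : 0 ≤ α * (1 - α) := by nlinarith
    positivity
  have hZr : Z r ^ α = 1 / Z r ^ (-α) := by rw [rpow_neg (hmem r hr).1.le, one_div, inv_inv]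
  rw [hZr]
  exact ⟨one_div_le_one_div_of_le (rpow_pos_of_pos (hmem r hr).1 _) (by linarith),
    one_div_le_one_div_of_le hlow_pos (by linarith)⟩

theorem stmt3 (α z : ℝ) (hα : α ∈ Set.Ioo (0:ℝ) 1) (hz : z ∈ Set.Ioc (0:ℝ) 1)
    (Z : ℕ → ℝ) (hZ0 : Z 0 = z)
    (hrec : ∀ r : ℕ, Z r = Z (r + 1) * (1 + 2 ^ α * Z (r + 1) ^ α))
    (hmem : ∀ r : ℕ, 1 ≤ r → Z r ∈ Set.Ioc (0:ℝ) (1/2)) :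
    ∀ r : ℕ, 1 ≤ r →
      1 / (z ^ (-α) + r * α * 2 ^ α) ≤ Z r ^ α ∧
        Z r ^ α ≤ 1 / (z ^ (-α) + r * (α * (1 - α)) * 2 ^ (α - 1)) :=
  stmt3_general α z hα Z hZ0 hrec hmem
end

section
/- With z_r = E_α^{−r}(z) as above, for all j ≥ 1 the quantity (1 − (1 + 2^α z_j^α)^{−α})/z_j^α lies between α(1−α)2^{α−1} and α·2^α. -/
/-! With `t = (2 z_j)^α ∈ (0, 1]`, Bernoulli's inequality for the exponent `α ∈ [0, 1]`, applied
once to `1 + t` and once to `(1 + t)⁻¹ = 1 - t / (1 + t)`, traps `1 - (1 + t)^(-α)` between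
`α t / 2` and `α t`. -/

section Bernoulli

variable {α t : ℝ}

lemma one_sub_mul_le_one_add_rpow_neg (hα0 : 0 ≤ α) (hα1 : α ≤ 1) (ht : 0 ≤ t) :
    1 - α * t ≤ (1 + t) ^ (-α) := by
  have h1t : 0 < 1 + t := by linarith
  have hαt : 0 ≤ α * t := mul_nonneg hα0 ht
  rw [Real.rpow_neg h1t.le]
  calc 1 - α * t ≤ (1 + α * t)⁻¹ := by
        rw [← one_div, le_div_iff₀ (by linarith)]
        nlinarith
    _ ≤ ((1 + t) ^ α)⁻¹ :=
        inv_anti₀ (Real.rpow_pos_of_pos h1t α)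
          (rpow_one_add_le_one_add_mul_self (by linarith) hα0 hα1)

lemma one_add_rpow_neg_le_one_sub_mul_div (hα0 : 0 ≤ α) (hα1 : α ≤ 1) (ht : 0 ≤ t) :
    (1 + t) ^ (-α) ≤ 1 - α * (t / (1 + t)) := by
  have h1t : 0 < 1 + t := by linarith
  have hinv : (1 + t)⁻¹ = 1 + -(t / (1 + t)) := by
    field_simp
    ring
  have hs : -1 ≤ -(t / (1 + t)) := by
    rw [neg_le_neg_iff, div_le_one h1t]
    linarith
  calc (1 + t) ^ (-α) = (1 + -(t / (1 + t))) ^ α := by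
        rw [Real.rpow_neg h1t.le, ← Real.inv_rpow h1t.le, hinv]
    _ ≤ 1 + α * -(t / (1 + t)) := rpow_one_add_le_one_add_mul_self hs hα0 hα1
    _ = 1 - α * (t / (1 + t)) := by ring

lemma one_sub_one_add_rpow_neg_mem_Icc (hα0 : 0 ≤ α) (hα1 : α ≤ 1) (ht0 : 0 ≤ t) (ht1 : t ≤ 1) :
    1 - (1 + t) ^ (-α) ∈ Set.Icc (α * t / 2) (α * t) := by
  have hhalf : t / 2 ≤ t / (1 + t) := div_le_div_of_nonneg_left ht0 (by linarith) (by linarith)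
  constructor
  · have := one_add_rpow_neg_le_one_sub_mul_div hα0 hα1 ht0
    nlinarith [mul_le_mul_of_nonneg_left hhalf hα0]
  · linarith [one_sub_mul_le_one_add_rpow_neg hα0 hα1 ht0]

end Bernoulli

lemma two_rpow_mul_rpow_le_one {α u : ℝ} (hα : 0 ≤ α) (hu0 : 0 ≤ u) (hu : u ≤ 1 / 2) :
    2 ^ α * u ^ α ≤ 1 := by
  rw [← Real.mul_rpow zero_le_two hu0]
  exact Real.rpow_le_one (by positivity) (by linarith) hα

theorem stmt5_general (α : ℝ) (hα : α ∈ Set.Ioo (0:ℝ) 1)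
    (Z : ℕ → ℝ)
    (hmem : ∀ r : ℕ, 1 ≤ r → Z r ∈ Set.Ioc (0:ℝ) (1/2)) :
    ∀ j : ℕ, 1 ≤ j →
      α * (1 - α) * 2 ^ (α - 1) ≤ (1 - (1 + 2 ^ α * Z j ^ α) ^ (-α)) / Z j ^ α ∧
        (1 - (1 + 2 ^ α * Z j ^ α) ^ (-α)) / Z j ^ α ≤ α * 2 ^ α := by
  obtain ⟨hα0, hα1⟩ := hα
  intro j hj
  obtain ⟨hu0, hu⟩ := hmem j hj
  have hpow : 0 < Z j ^ α := Real.rpow_pos_of_pos hu0 α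
  have h2pow : 0 < (2 : ℝ) ^ α := Real.rpow_pos_of_pos two_pos α
  obtain ⟨hlow, hupp⟩ := one_sub_one_add_rpow_neg_mem_Icc hα0.le hα1.le
    (mul_pos h2pow hpow).le (two_rpow_mul_rpow_le_one hα0.le hu0.le hu)
  have h2sub : (2 : ℝ) ^ (α - 1) = 2 ^ α / 2 := by
    rw [Real.rpow_sub two_pos, Real.rpow_one]
  rw [le_div_iff₀ hpow, div_le_iff₀ hpow, h2sub]
  constructor
  · calc α * (1 - α) * (2 ^ α / 2) * Z j ^ α ≤ α * (2 ^ α * Z j ^ α) / 2 := by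
          nlinarith [mul_pos (mul_pos hα0 h2pow) hpow]
      _ ≤ _ := hlow
  · linarith

theorem stmt5 (α z : ℝ) (hα : α ∈ Set.Ioo (0:ℝ) 1) (hz : z ∈ Set.Ioc (0:ℝ) 1)
    (Z : ℕ → ℝ) (hZ0 : Z 0 = z)
    (hrec : ∀ r : ℕ, Z r = Z (r + 1) * (1 + 2 ^ α * Z (r + 1) ^ α))
    (hmem : ∀ r : ℕ, 1 ≤ r → Z r ∈ Set.Ioc (0:ℝ) (1/2)) :
    ∀ j : ℕ, 1 ≤ j →
      α * (1 - α) * 2 ^ (α - 1) ≤ (1 - (1 + 2 ^ α * Z j ^ α) ^ (-α)) / Z j ^ α ∧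
        (1 - (1 + 2 ^ α * Z j ^ α) ^ (-α)) / Z j ^ α ≤ α * 2 ^ α :=
  stmt5_general α hα Z hmem
end

section
/- Let α ∈ (0,1) and fix a compact interval [α₋, α₊] ⊂ (0,1). With z_r = E_α^{−r}(z), there is a constant C depending only on α₋, α₊ such that for all α ∈ [α₋,α₊], z ∈ (0,1], and r ≥ 1: C·z^α/r ≤ z_r^α ≤ C'/r for some constants C, C' depending only on α₋, α₊ (i.e. z_r^α is of order 1/r, with lower bound proportional to z^α). -/
lemma concave_aux {α t : ℝ} (hα0 : 0 ≤ α) (hα1 : α ≤ 1) (ht0 : 0 ≤ t) (ht1 : t ≤ 1) :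
    1 + ((2:ℝ) ^ α - 1) * t ≤ (1 + t) ^ α := by
  have h := (Real.concaveOn_rpow hα0 hα1).2
    (show (1:ℝ) ∈ Set.Ici (0:ℝ) by norm_num) (show (2:ℝ) ∈ Set.Ici (0:ℝ) by norm_num)
    (show (0:ℝ) ≤ 1 - t by linarith) ht0 (show (1 - t) + t = 1 by ring)
  have e1 : (1 - t) • (1:ℝ) + t • (2:ℝ) = 1 + t := by simp [smul_eq_mul]; ring
  rw [e1] at h
  simp only [smul_eq_mul, Real.one_rpow] at h
  nlinarith [h]

set_option maxHeartbeats 1000000 in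
theorem stmt6 (αm αp : ℝ) (h1 : 0 < αm) (h2 : αm ≤ αp) (h3 : αp < 1) :
    ∃ C C' : ℝ, 0 < C ∧ 0 < C' ∧
      ∀ α ∈ Set.Icc αm αp, ∀ z ∈ Set.Ioc (0:ℝ) 1, ∀ Z : ℕ → ℝ,
        Z 0 = z →
        (∀ r : ℕ, Z r = Z (r + 1) * (1 + 2 ^ α * Z (r + 1) ^ α)) →
        (∀ r : ℕ, 1 ≤ r → Z r ∈ Set.Ioc (0:ℝ) (1/2)) →
        ∀ r : ℕ, 1 ≤ r →
          C * z ^ α / r ≤ Z r ^ α ∧ Z r ^ α ≤ C' / r := by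
  set c := (2:ℝ) ^ αm - 1 with hcdef
  have hc0 : 0 < c := by
    have : (1:ℝ) < 2 ^ αm :=
      Real.one_lt_rpow_iff_of_pos (by norm_num) |>.2 (Or.inl ⟨one_lt_two, h1⟩)
    simp only [hcdef]; linarith
  refine ⟨1/3, 1/c, by norm_num, by positivity, ?_⟩
  rintro α ⟨hαm, hαp⟩ z ⟨hz0, hz1⟩ Z hZ0 hrec hbd r hr
  have hα0 : 0 < α := lt_of_lt_of_le h1 hαm
  have hα1 : α < 1 := lt_of_le_of_lt hαp h3
  have hpos : ∀ r, 0 < Z r := by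
    intro r
    cases r with
    | zero => rw [hZ0]; exact hz0
    | succ n => exact (hbd (n+1) (Nat.le_add_left 1 n)).1
  set a : ℕ → ℝ := fun r => Z r ^ α with hadef
  have hapos : ∀ r, 0 < a r := fun r => Real.rpow_pos_of_pos (hpos r) α
  have h2pos : (0:ℝ) < 2 ^ α := Real.rpow_pos_of_pos two_pos α
  have h2α : (2:ℝ) ^ α ≤ 2 := by
    calc (2:ℝ) ^ α ≤ 2 ^ (1:ℝ) := Real.rpow_le_rpow_of_exponent_le one_le_two hα1.le
    _ = 2 := Real.rpow_one 2
  have hcα : c ≤ 2 ^ α - 1 := by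
    have : (2:ℝ) ^ αm ≤ 2 ^ α := Real.rpow_le_rpow_of_exponent_le one_le_two hαm
    simp only [hcdef]; linarith
  have harec : ∀ r : ℕ, a r = a (r+1) * (1 + 2 ^ α * a (r+1)) ^ α := by
    intro r
    show Z r ^ α = Z (r+1) ^ α * (1 + 2 ^ α * Z (r+1) ^ α) ^ α
    have hq : (0:ℝ) ≤ 1 + 2 ^ α * Z (r+1) ^ α := by
      nlinarith [mul_pos h2pos (Real.rpow_pos_of_pos (hpos (r+1)) α)]
    rw [hrec r, Real.mul_rpow (hpos (r+1)).le hq]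
  have ht1 : ∀ r : ℕ, 2 ^ α * a (r+1) ≤ 1 := by
    intro r
    have hz12 : Z (r+1) ≤ 1/2 := (hbd (r+1) (Nat.le_add_left 1 r)).2
    have h' : a (r+1) ≤ (1/2 : ℝ) ^ α :=
      Real.rpow_le_rpow (hpos (r+1)).le hz12 hα0.le
    have e : (2:ℝ) ^ α * (1/2:ℝ) ^ α = 1 := by
      rw [← Real.mul_rpow (by norm_num) (by norm_num)]; norm_num
    nlinarith [h2pos]
  set b : ℕ → ℝ := fun r => (a r)⁻¹ with hbdef
  have hbpos : ∀ r, 0 < b r := fun r => inv_pos.2 (hapos r)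
  -- step bounds
  have hstep_up : ∀ r : ℕ, b (r+1) ≤ b r + 2 := by
    intro r
    have hY := hapos (r+1)
    have hbase : (0:ℝ) < 1 + 2 ^ α * a (r+1) := by nlinarith [mul_pos h2pos hY]
    have hspos : (0:ℝ) < (1 + 2 ^ α * a (r+1)) ^ α := Real.rpow_pos_of_pos hbase α
    have hBer : (1 + 2 ^ α * a (r+1)) ^ α ≤ 1 + α * (2 ^ α * a (r+1)) :=
      rpow_one_add_le_one_add_mul_self (by nlinarith [mul_pos h2pos hY]) hα0.le hα1.le
    have hs1 : (1:ℝ) ≤ (1 + 2 ^ α * a (r+1)) ^ α := by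
      have := Real.rpow_le_rpow zero_le_one
        (by nlinarith [mul_pos h2pos hY] : (1:ℝ) ≤ 1 + 2 ^ α * a (r+1)) hα0.le
      rwa [Real.one_rpow] at this
    show (a (r+1))⁻¹ ≤ (a r)⁻¹ + 2
    rw [harec r, mul_inv]
    set s := (1 + 2 ^ α * a (r+1)) ^ α with hsdef
    set y := (a (r+1))⁻¹ with hydef
    have hy : 0 < y := inv_pos.2 hY
    have hya : y * a (r+1) = 1 := inv_mul_cancel₀ hY.ne'
    have hsinv : s * s⁻¹ = 1 := mul_inv_cancel₀ hspos.ne'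
    have key : y * s ≤ y + 2 * s := by
      nlinarith [mul_le_mul_of_nonneg_left hBer hy.le,
        mul_le_mul_of_nonneg_right hα1.le h2pos.le,
        mul_pos h2pos hY, hs1]
    calc y = y * s * s⁻¹ := by rw [mul_assoc, hsinv, mul_one]
      _ ≤ (y + 2 * s) * s⁻¹ := mul_le_mul_of_nonneg_right key (inv_pos.2 hspos).le
      _ = y * s⁻¹ + 2 * (s * s⁻¹) := by ring
      _ = y * s⁻¹ + 2 := by rw [hsinv, mul_one]
  have hstep_lo : ∀ r : ℕ, b r + c ≤ b (r+1) := by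
    intro r
    have hY := hapos (r+1)
    have hbase : (0:ℝ) < 1 + 2 ^ α * a (r+1) := by nlinarith [mul_pos h2pos hY]
    have hspos : (0:ℝ) < (1 + 2 ^ α * a (r+1)) ^ α := Real.rpow_pos_of_pos hbase α
    have hs_lo : 1 + ((2:ℝ) ^ α - 1) * (2 ^ α * a (r+1)) ≤ (1 + 2 ^ α * a (r+1)) ^ α :=
      concave_aux hα0.le hα1.le (mul_pos h2pos hY).le (ht1 r)
    have hs_hi : (1 + 2 ^ α * a (r+1)) ^ α ≤ 2 ^ α := by
      have := Real.rpow_le_rpow hbase.le (by linarith [ht1 r] : 1 + 2 ^ α * a (r+1) ≤ 2) hα0.le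
      exact this
    show (a r)⁻¹ + c ≤ (a (r+1))⁻¹
    rw [harec r, mul_inv]
    set s := (1 + 2 ^ α * a (r+1)) ^ α with hsdef
    set y := (a (r+1))⁻¹ with hydef
    have hy : 0 < y := inv_pos.2 hY
    have hya : y * a (r+1) = 1 := inv_mul_cancel₀ hY.ne'
    have hsinv : s * s⁻¹ = 1 := mul_inv_cancel₀ hspos.ne'
    have key : y + c * s ≤ y * s := by
      nlinarith [mul_le_mul_of_nonneg_left hs_lo hy.le,
        mul_le_mul hcα hs_hi hspos.le (by linarith : (0:ℝ) ≤ 2 ^ α - 1),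
        mul_pos h2pos hY]
    calc y * s⁻¹ + c = (y + c * s) * s⁻¹ - c * (s * s⁻¹) + c := by ring
      _ = (y + c * s) * s⁻¹ := by rw [hsinv]; ring
      _ ≤ y * s * s⁻¹ := mul_le_mul_of_nonneg_right key (inv_pos.2 hspos).le
      _ = y := by rw [mul_assoc, hsinv, mul_one]
  -- global bounds by induction
  have claim_up : ∀ n : ℕ, b n ≤ b 0 + 2 * n := by
    intro n
    induction n with
    | zero => simp
    | succ k ih =>
      have := hstep_up k
      push_cast
      push_cast at ih
      linarith
  have claim_lo : ∀ n : ℕ, 1 ≤ n → c * n + 1 ≤ b n := by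
    intro n hn
    induction n, hn using Nat.le_induction with
    | base =>
      have hz12 : Z 1 ≤ 1/2 := (hbd 1 le_rfl).2
      have h' : a 1 ≤ (1/2 : ℝ) ^ α := Real.rpow_le_rpow (hpos 1).le hz12 hα0.le
      have e : ((1:ℝ)/2) ^ α = (2 ^ α)⁻¹ := by
        rw [one_div, Real.inv_rpow (by norm_num)]
      have h'' : a 1 ≤ (2 ^ α)⁻¹ := by rw [← e]; exact h'
      have h3' : (2:ℝ) ^ α ≤ (a 1)⁻¹ := by
        have := inv_anti₀ (hapos 1) h''
        rwa [inv_inv] at this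
      have h4 : (2:ℝ) ^ αm ≤ 2 ^ α := Real.rpow_le_rpow_of_exponent_le one_le_two hαm
      show c * (1:ℕ) + 1 ≤ b 1
      have : b 1 = (a 1)⁻¹ := rfl
      push_cast
      simp only [hcdef]
      linarith
    | succ k hk ih =>
      have := hstep_lo k
      push_cast
      push_cast at ih
      linarith
  -- conclude
  have hrR : (1:ℝ) ≤ (r:ℝ) := by exact_mod_cast hr
  have hrpos : (0:ℝ) < (r:ℝ) := by linarith
  constructor
  · -- lower bound
    have hb0 : b 0 = (z ^ α)⁻¹ := by
      show (Z 0 ^ α)⁻¹ = (z ^ α)⁻¹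
      rw [hZ0]
    have hzα : (0:ℝ) < z ^ α := Real.rpow_pos_of_pos hz0 α
    have hzα1 : z ^ α ≤ 1 := Real.rpow_le_one hz0.le hz1 hα0.le
    have hup : b r ≤ (z ^ α)⁻¹ + 2 * r := by
      have := claim_up r; rwa [hb0] at this
    have hinv : ((z ^ α)⁻¹ + 2 * r)⁻¹ ≤ a r := by
      have := inv_anti₀ (hbpos r) hup
      rwa [show (b r)⁻¹ = a r from inv_inv (a r)] at this
    have hwpos : (0:ℝ) < (z ^ α)⁻¹ := inv_pos.2 hzα
    have hD : (0:ℝ) < (z ^ α)⁻¹ + 2 * r := by linarith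
    have hfin : 1/3 * z ^ α / r ≤ ((z ^ α)⁻¹ + 2 * r)⁻¹ := by
      rw [inv_eq_one_div, div_le_div_iff₀ hrpos hD]
      have hzz : z ^ α * (z ^ α)⁻¹ = 1 := mul_inv_cancel₀ hzα.ne'
      nlinarith [hzz, mul_le_mul_of_nonneg_right hzα1 (by linarith : (0:ℝ) ≤ 2 * (r:ℝ))]
    exact le_trans hfin hinv
  · -- upper bound
    have hlo : c * r + 1 ≤ b r := claim_lo r hr
    have hinv : a r ≤ (c * r + 1)⁻¹ := by
      have := inv_anti₀ (by positivity) hlo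
      rwa [show (b r)⁻¹ = a r from inv_inv (a r)] at this
    have h5 : (c * (r:ℝ) + 1)⁻¹ ≤ (c * r)⁻¹ :=
      inv_anti₀ (by positivity) (by linarith)
    have h6 : ((c * (r:ℝ))⁻¹ : ℝ) = 1 / c / r := by
      rw [div_div, one_div]
    calc a r ≤ (c * r + 1)⁻¹ := hinv
      _ ≤ (c * r)⁻¹ := h5
      _ = 1 / c / r := h6
end

section
/- With z_r = E_α^{−r}(z), for any compact [α₋,α₊] ⊂ (0,1) there is a constant C such that −log z_r ≤ C·(max(1, log r) − log z) for all α ∈ [α₋,α₊], z ∈ (0,1], r ≥ 1. -/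
/-- Bernoulli-type bound: `1 - p*t ≤ (1+t)^(-p)` for `p ∈ [0,1]`, `t ≥ 0`. -/
lemma bern_aux {p t : ℝ} (hp0 : 0 ≤ p) (hp1 : p ≤ 1) (ht : 0 ≤ t) :
    1 - p * t ≤ (1 + t) ^ (-p) := by
  have h1t : (0:ℝ) < 1 + t := by linarith
  rcases le_or_gt (1 - p * t) 0 with h | h
  · exact h.trans (Real.rpow_pos_of_pos h1t _).le
  · have hup : (1 + t) ^ p ≤ 1 + p * t := by
      have := rpow_one_add_le_one_add_mul_self (s := t) (by linarith) hp0 hp1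
      simpa using this
    have hpos : (0:ℝ) < (1 + t) ^ p := Real.rpow_pos_of_pos h1t _
    rw [Real.rpow_neg h1t.le, le_inv_comm₀ h hpos]
    calc (1 + t) ^ p ≤ 1 + p * t := hup
      _ ≤ (1 - p * t)⁻¹ := by
        rw [le_inv_comm₀ (by positivity) h]
        have hc : (1 + p * t) * (1 + p * t)⁻¹ = 1 := mul_inv_cancel₀ (by positivity)
        nlinarith [hc, sq_nonneg (p * t), inv_pos.mpr (show (0:ℝ) < 1 + p * t by positivity)]

theorem stmt7 (αm αp : ℝ) (h1 : 0 < αm) (h2 : αm ≤ αp) (h3 : αp < 1) :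
    ∃ C : ℝ, 0 < C ∧
      ∀ α ∈ Set.Icc αm αp, ∀ z ∈ Set.Ioc (0:ℝ) 1, ∀ Z : ℕ → ℝ,
        Z 0 = z →
        (∀ r : ℕ, Z r = Z (r + 1) * (1 + 2 ^ α * Z (r + 1) ^ α)) →
        (∀ r : ℕ, 1 ≤ r → Z r ∈ Set.Ioc (0:ℝ) (1/2)) →
        ∀ r : ℕ, 1 ≤ r →
          -Real.log (Z r) ≤ C * (max 1 (Real.log r) - Real.log z) := by
  refine ⟨1 + 3 / αm, by positivity, ?_⟩
  rintro α ⟨hαm, hαp⟩ z ⟨hz0, hz1⟩ Z hZ0 hrec hhalf r hr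
  have hα0 : 0 < α := lt_of_lt_of_le h1 hαm
  have hα1 : α < 1 := lt_of_le_of_lt hαp h3
  -- positivity of Z
  have hZpos : ∀ n, 0 < Z n := by
    intro n
    cases n with
    | zero => simpa [hZ0] using hz0
    | succ m => exact (hhalf (m + 1) (Nat.le_add_left 1 m)).1
  -- key step inequality on u n = (Z n)^(-α)
  have hstep : ∀ n : ℕ, Z (n + 1) ^ (-α) ≤ Z n ^ (-α) + α * 2 ^ α := by
    intro n
    set y := Z (n + 1) with hy
    have hy0 : 0 < y := hZpos (n + 1)
    have ht0 : (0:ℝ) ≤ 2 ^ α * y ^ α := by positivity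
    have hZn : Z n = y * (1 + 2 ^ α * y ^ α) := hrec n
    have hmul : Z n ^ (-α) = y ^ (-α) * (1 + 2 ^ α * y ^ α) ^ (-α) := by
      rw [hZn, Real.mul_rpow hy0.le (by linarith)]
    have hbern := bern_aux hα0.le hα1.le ht0
    have hyα : y ^ (-α) * (y ^ α) = 1 := by
      rw [← Real.rpow_add hy0]; simp
    have : y ^ (-α) * (1 - α * (2 ^ α * y ^ α)) ≤ Z n ^ (-α) := by
      rw [hmul]
      exact mul_le_mul_of_nonneg_left hbern (Real.rpow_nonneg hy0.le _)
    have hexp : y ^ (-α) * (1 - α * (2 ^ α * y ^ α)) = y ^ (-α) - α * 2 ^ α := by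
      have : y ^ (-α) * (α * (2 ^ α * y ^ α)) = α * 2 ^ α := by
        calc y ^ (-α) * (α * (2 ^ α * y ^ α))
            = (α * 2 ^ α) * (y ^ (-α) * y ^ α) := by ring
          _ = α * 2 ^ α := by rw [hyα, mul_one]
      linarith [this, mul_one (y ^ (-α))]
    linarith [hexp ▸ this]
  -- induction: u n ≤ z^(-α) + 2 n
  have hbound : ∀ n : ℕ, Z n ^ (-α) ≤ z ^ (-α) + 2 * n := by
    intro n
    induction n with
    | zero => simp [hZ0]
    | succ m ih =>
      have h2α : α * 2 ^ α ≤ 2 := by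
        have : (2:ℝ) ^ α ≤ 2 ^ (1:ℝ) :=
          Real.rpow_le_rpow_of_exponent_le one_le_two hα1.le
        nlinarith [Real.rpow_pos_of_pos (by norm_num : (0:ℝ) < 2) α]
      have := hstep m
      push_cast
      linarith
  -- now estimate for r ≥ 1
  have hZr := hhalf r hr
  have hZr0 : 0 < Z r := hZr.1
  have hZr1 : Z r ≤ 1 := hZr.2.trans (by norm_num)
  have hr1 : (1:ℝ) ≤ (r:ℝ) := by exact_mod_cast hr
  have hzα1 : (1:ℝ) ≤ z ^ (-α) := by
    rw [Real.rpow_neg hz0.le, one_le_inv_iff₀]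
    exact ⟨Real.rpow_pos_of_pos hz0 _, Real.rpow_le_one hz0.le hz1 hα0.le⟩
  have hchain : z ^ (-α) + 2 * r ≤ z ^ (-α) * (3 * r) := by
    have h2 : 2 * (r:ℝ) ≤ z ^ (-α) * (2 * r) :=
      le_mul_of_one_le_left (by positivity) hzα1
    nlinarith
  have hlogu : -(α * Real.log (Z r)) ≤ -(α * Real.log z) + Real.log 3 + Real.log r := by
    have h1' : Real.log (Z r ^ (-α)) ≤ Real.log (z ^ (-α) * (3 * r)) := by
      apply Real.log_le_log (by positivity)
      exact (hbound r).trans hchain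
    rw [Real.log_rpow hZr0, Real.log_mul (by positivity) (by positivity),
        Real.log_rpow hz0, Real.log_mul (by norm_num) (by positivity)] at h1'
    linarith
  set M := max 1 (Real.log r) with hM
  have hM1 : (1:ℝ) ≤ M := le_max_left _ _
  have hMr : Real.log r ≤ M := le_max_right _ _
  have hlog3 : Real.log 3 ≤ 2 := by
    have : Real.log 3 ≤ Real.log (Real.exp 2) := by
      apply Real.log_le_log (by norm_num)
      have := Real.add_one_le_exp (2:ℝ)
      linarith
    simpa using this
  have hlogz : -Real.log z ≥ 0 := by
    simpa using Real.log_nonpos hz0.le hz1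
  -- divide by α
  have h3M : Real.log 3 + Real.log r ≤ 3 * M := by linarith
  have hkey : α * (-Real.log (Z r)) ≤ α * (-Real.log z + 3 * M / αm) := by
    have hα : αm ≤ α := hαm
    have : 3 * M ≤ α * (3 * M / αm) := by
      rw [mul_div_assoc', le_div_iff₀ h1]
      nlinarith
    nlinarith [hlogu]
  have hdiv : -Real.log (Z r) ≤ -Real.log z + 3 * M / αm :=
    le_of_mul_le_mul_left (by linarith [hkey]) hα0
  have hC1 : (1:ℝ) ≤ 1 + 3 / αm := by
    have := div_pos (by norm_num : (0:ℝ) < 3) h1; linarith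
  have hMd : 3 * M / αm = (3 / αm) * M := by ring
  nlinarith [mul_le_mul_of_nonneg_right hC1 hlogz, hM1]
end

section
/- Let z_r' = d/dz E_α^{−r}(z). For any compact [α₋,α₊] ⊂ (0,1) there is a constant C such that 0 ≤ z_r' ≤ C·(1 + r·z^α·α·2^α)^{−(α+1)/α} for all α ∈ [α₋,α₊], z ∈ (0,1], r ≥ 1. In particular z_r' ≤ C·r^{−(α+1)/α}·z^{−(α+1)}. -/
/-!
Write `z_j = E_α^{-j}(z)` and `t_j = (2 z_j)^α`, so that `z_{j-1} = z_j (1 + t_j)` and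
`E_α'(z_j) = 1 + (α + 1) t_j`. Bernoulli's inequality makes `1 / t_j` grow by at least `α / 2`
per step. Hence `∑ t_j² ≤ 4 / α`, because `(α / 2) t_{j+1}² ≤ t_j - t_{j+1}` telescopes, and
`(z / z_r)^α = t_0 / t_r ≥ 1 + r α t_0 / 2`. Since `(1 + t)^(α+1) ≤ (1 + (α + 1) t) e^(4t²)`,
the product `∏ E_α'(z_j)`, which is `1 / z_r'` because `z_r` is a monotone right inverse of `E_α^r`
on `(0, ∞)` and hence continuous, is at least `e^(-16/α) (z / z_r)^(α+1)`, and
`(z / z_r)^(α+1) = ((z / z_r)^α)^((α+1)/α)`. The resulting constant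
`e^(16/α) (α / 2)^(-(α+1)/α)` decreases in `α`, so `α = α₋` serves for the whole range.
-/

open Real Set Finset Filter Topology

theorem div_one_add_le_log_one_add {s : ℝ} (hs : 0 ≤ s) : s / (1 + s) ≤ log (1 + s) := by
  have h := one_sub_inv_le_log_of_pos (by positivity : 0 < 1 + s)
  have h' : 1 - (1 + s)⁻¹ = s / (1 + s) := by field_simp; ring
  rwa [h'] at h

theorem exp_le_one_add_mul_exp_sq {s : ℝ} (hs : 0 ≤ s) : exp s ≤ (1 + s) * exp (s ^ 2) := by
  have hlog := div_one_add_le_log_one_add hs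
  have hsq : s - s / (1 + s) ≤ s ^ 2 := by
    have : s - s / (1 + s) = s ^ 2 / (1 + s) := by field_simp; ring
    rw [this]
    exact div_le_self (sq_nonneg s) (by linarith)
  calc exp s ≤ exp (log (1 + s) + s ^ 2) := exp_le_exp.2 (by linarith)
    _ = (1 + s) * exp (s ^ 2) := by rw [exp_add, exp_log (by positivity)]

theorem one_add_rpow_add_one_le_mul_exp {α t : ℝ} (hα0 : 0 ≤ α) (hα1 : α ≤ 1) (ht : 0 ≤ t) :
    (1 + t) ^ (α + 1) ≤ (1 + (α + 1) * t) * exp (4 * t ^ 2) :=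
  calc (1 + t) ^ (α + 1) ≤ exp t ^ (α + 1) := by
        gcongr
        linarith [add_one_le_exp t]
    _ = exp ((α + 1) * t) := by rw [← exp_mul, mul_comm]
    _ ≤ (1 + (α + 1) * t) * exp (((α + 1) * t) ^ 2) := exp_le_one_add_mul_exp_sq (by positivity)
    _ ≤ (1 + (α + 1) * t) * exp (4 * t ^ 2) := by
        gcongr
        rw [mul_pow]
        gcongr
        nlinarith

theorem one_add_rpow_neg_le_one_sub {α t : ℝ} (hα0 : 0 ≤ α) (hα1 : α ≤ 1) (ht0 : 0 ≤ t)
    (ht1 : t ≤ 1) :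
    (1 + t) ^ (-α) ≤ 1 - α * t / 2 := by
  have h1t : 0 < 1 + t := by linarith
  have hinv : (1 + t) ^ (-α) = (1 + -(t / (1 + t))) ^ α := by
    rw [rpow_neg h1t.le, ← inv_rpow h1t.le]
    congr 1
    field_simp
    ring
  calc (1 + t) ^ (-α) = (1 + -(t / (1 + t))) ^ α := hinv
    _ ≤ 1 + α * -(t / (1 + t)) := by
        refine rpow_one_add_le_one_add_mul_self ?_ hα0 hα1
        rw [neg_le_neg_iff, div_le_one h1t]; linarith
    _ ≤ 1 - α * t / 2 := by
        have : t / 2 ≤ t / (1 + t) := div_le_div_of_nonneg_left ht0 h1t (by linarith)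
        nlinarith

theorem rpow_le_rpow_mul_rpow_of_mul_le {x y c e : ℝ} (hc : 0 < c) (hy : 0 < y) (h : c * y ≤ x)
    (he : e ≤ 0) : x ^ e ≤ c ^ e * y ^ e := by
  rw [← mul_rpow hc.le hy.le]
  exact rpow_le_rpow_of_nonpos (by positivity) h he

theorem add_mul_le_of_forall_add_le {a : ℕ → ℝ} {c : ℝ} (h : ∀ j, a j + c ≤ a (j + 1)) (n : ℕ) :
    a 0 + n * c ≤ a n := by
  induction n with
  | zero => simp
  | succ n ih => push_cast; linarith [h n]

theorem sum_range_succ_sq_le_of_inv_add_le {t : ℕ → ℝ} {c : ℝ} (hc : 0 < c) (ht : ∀ j, 0 < t j)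
    (h : ∀ j, (t j)⁻¹ + c ≤ (t (j + 1))⁻¹) (n : ℕ) :
    ∑ j ∈ range n, t (j + 1) ^ 2 ≤ t 0 / c := by
  have hterm : ∀ j, c * t (j + 1) ^ 2 ≤ t j - t (j + 1) := fun j => by
    have h0 := ht j
    have h1 := ht (j + 1)
    have hle : t (j + 1) ≤ t j := by
      have := h j
      rw [← inv_le_inv₀ h0 h1]; linarith
    calc c * t (j + 1) ^ 2 ≤ c * (t j * t (j + 1)) := by rw [sq]; gcongr
      _ ≤ ((t (j + 1))⁻¹ - (t j)⁻¹) * (t j * t (j + 1)) := by gcongr; linarith [h j]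
      _ = t j - t (j + 1) := by field_simp
  calc ∑ j ∈ range n, t (j + 1) ^ 2 ≤ ∑ j ∈ range n, (t j - t (j + 1)) / c :=
        sum_le_sum fun j _ => by rw [le_div_iff₀ hc, mul_comm]; exact hterm j
    _ = (t 0 - t n) / c := by rw [← sum_div, sum_range_sub']
    _ ≤ t 0 / c := by gcongr; linarith [ht n]

theorem prod_range_eq_div_of_eq_mul {K : Type*} [Field K] {w a : ℕ → K} (hw : ∀ j, w j ≠ 0)
    (h : ∀ j, w j = w (j + 1) * a j) (n : ℕ) : ∏ j ∈ range n, a j = w 0 / w n := by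
  induction n with
  | zero => simp [hw 0]
  | succ n ih =>
    have ha : a n = w n / w (n + 1) := by rw [h n, mul_div_cancel_left₀ _ (hw (n + 1))]
    rw [prod_range_succ, ih, ha, div_mul_div_cancel₀ (hw n)]

theorem StrictMonoOn.iterate {α : Type*} [Preorder α] {f : α → α} {s : Set α}
    (hf : StrictMonoOn f s) (hs : MapsTo f s s) (n : ℕ) : StrictMonoOn f^[n] s := by
  induction n with
  | zero => exact strictMonoOn_id
  | succ n ih => rw [Function.iterate_succ]; exact ih.comp hf hs

theorem StrictMonoOn.hasDerivAt_of_rightInvOn {f g : ℝ → ℝ} {s t : Set ℝ} {a f' : ℝ}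
    (hf : StrictMonoOn f s) (hfs : MapsTo f s t) (hgt : MapsTo g t s) (hfg : RightInvOn g f t)
    (hs : s ∈ 𝓝 (g a)) (ht : t ∈ 𝓝 a) (hderiv : HasDerivAt f f' (g a)) (hf' : f' ≠ 0) :
    HasDerivAt g f'⁻¹ a := by
  have hmono : MonotoneOn g t := fun x hx y hy hxy =>
    (hf.le_iff_le (hgt hx) (hgt hy)).1 (by rwa [hfg hx, hfg hy])
  have himage : s ⊆ g '' t := fun x hx =>
    ⟨f x, hfs hx, hf.injOn (hgt (hfs hx)) hx (hfg (hfs hx))⟩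
  exact hderiv.of_local_left_inverse
    (continuousAt_of_monotoneOn_of_image_mem_nhds hmono ht (mem_of_superset hs himage)) hf'
    (eventually_of_mem ht hfg)

theorem hasDerivAt_iterate_of_backwardOrbit {𝕜 : Type*} [NontriviallyNormedField 𝕜]
    {f f' : 𝕜 → 𝕜} {w : ℕ → 𝕜} (hw : ∀ j, f (w (j + 1)) = w j)
    (hf : ∀ j, HasDerivAt f (f' (w (j + 1))) (w (j + 1))) (n : ℕ) :
    HasDerivAt f^[n] (∏ j ∈ range n, f' (w (j + 1))) (w n) := by
  induction n with
  | zero => simpa using hasDerivAt_id (w 0)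
  | succ n ih =>
    rw [Function.iterate_succ, prod_range_succ]
    rw [← hw n] at ih
    exact ih.comp (w (n + 1)) (hf n)

theorem Ea_eq_mul_one_add (α : ℝ) {x : ℝ} (hx : 0 ≤ x) : Ea α x = x * (1 + (2 * x) ^ α) := by
  rw [Ea, mul_rpow zero_le_two hx]

theorem mapsTo_Ea (α : ℝ) : MapsTo (Ea α) (Ioi 0) (Ioi 0) := fun x (hx : 0 < x) => by
  rw [Set.mem_Ioi, Ea]; positivity

theorem strictMonoOn_Ea {α : ℝ} (hα : 0 ≤ α) : StrictMonoOn (Ea α) (Ioi 0) :=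
  fun x (hx : 0 < x) y (hy : 0 < y) hxy => by
    rw [Ea_eq_mul_one_add α hx.le, Ea_eq_mul_one_add α hy.le]
    have : (2 * x) ^ α ≤ (2 * y) ^ α := by gcongr
    exact mul_lt_mul hxy (by linarith) (by positivity) hy.le

theorem hasDerivAt_Ea (α : ℝ) {x : ℝ} (hx : 0 < x) :
    HasDerivAt (Ea α) (1 + (α + 1) * (2 * x) ^ α) x := by
  unfold Ea
  refine ((hasDerivAt_id' x).mul (((hasDerivAt_rpow_const (p := α) (Or.inl hx.ne')).const_mul
    ((2 : ℝ) ^ α)).const_add 1)).congr_deriv ?_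
  rw [mul_rpow zero_le_two hx.le, rpow_sub_one hx.ne']
  field_simp
  ring

theorem two_mul_Ea_rpow_inv_add_le {α x : ℝ} (hα0 : 0 ≤ α) (hα1 : α ≤ 1) (hx0 : 0 < x)
    (hx1 : x ≤ 1 / 2) : ((2 * Ea α x) ^ α)⁻¹ + α / 2 ≤ ((2 * x) ^ α)⁻¹ := by
  set t := (2 * x) ^ α with ht
  have ht0 : 0 < t := by positivity
  have ht1 : t ≤ 1 := rpow_le_one (by positivity) (by linarith) hα0
  have hEa : ((2 * Ea α x) ^ α)⁻¹ = t⁻¹ * (1 + t) ^ (-α) := by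
    rw [Ea_eq_mul_one_add α hx0.le, ← mul_assoc, mul_rpow (by positivity) (by positivity),
      rpow_neg (by positivity), mul_inv]
  calc ((2 * Ea α x) ^ α)⁻¹ + α / 2 = t⁻¹ * (1 + t) ^ (-α) + α / 2 := by rw [hEa]
    _ ≤ t⁻¹ * (1 - α * t / 2) + α / 2 := by
        gcongr; exact one_add_rpow_neg_le_one_sub hα0 hα1 ht0.le ht1
    _ = t⁻¹ := by field_simp; ring

theorem hasDerivAt_of_Ea_backwardOrbit {α : ℝ} (hα : 0 ≤ α) {Z : ℕ → ℝ → ℝ}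
    (hZ0 : ∀ x ∈ Ioi (0 : ℝ), Z 0 x = x)
    (hZ : ∀ r : ℕ, ∀ x ∈ Ioi (0 : ℝ), Ea α (Z (r + 1) x) = Z r x ∧ 0 < Z (r + 1) x)
    (r : ℕ) {z : ℝ} (hz : 0 < z) :
    HasDerivAt (Z r) (∏ j ∈ range r, (1 + (α + 1) * (2 * Z (j + 1) z) ^ α))⁻¹ z := by
  have hmaps : ∀ n, MapsTo (Z n) (Ioi 0) (Ioi 0)
    | 0 => fun x hx => by rwa [hZ0 x hx]
    | n + 1 => fun x hx => (hZ n x hx).2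
  have hinv : ∀ n, RightInvOn (Z n) (Ea α)^[n] (Ioi 0) := by
    intro n
    induction n with
    | zero => exact hZ0
    | succ n ih => intro x hx; rw [Function.iterate_succ_apply, (hZ n x hx).1]; exact ih hx
  refine ((strictMonoOn_Ea hα).iterate (mapsTo_Ea α) r).hasDerivAt_of_rightInvOn
    ((mapsTo_Ea α).iterate r) (hmaps r) (hinv r) (Ioi_mem_nhds (hmaps r hz)) (Ioi_mem_nhds hz)
    (hasDerivAt_iterate_of_backwardOrbit (f' := fun x => 1 + (α + 1) * (2 * x) ^ α)
      (w := fun j => Z j z) (fun j => (hZ j z hz).1)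
      (fun j => hasDerivAt_Ea α (hZ j z hz).2) r) ?_
  refine prod_ne_zero_iff.2 fun j _ => ?_
  have := (hZ j z hz).2
  positivity

section BackwardOrbit

variable {α : ℝ} {w : ℕ → ℝ}

theorem backwardOrbit_inv_add_le (hα0 : 0 ≤ α) (hα1 : α ≤ 1) (hw : ∀ j, 0 < w j)
    (hrec : ∀ j, Ea α (w (j + 1)) = w j) (hhalf : ∀ j, w (j + 1) ≤ 1 / 2) (j : ℕ) :
    ((2 * w j) ^ α)⁻¹ + α / 2 ≤ ((2 * w (j + 1)) ^ α)⁻¹ := by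
  rw [← hrec j]
  exact two_mul_Ea_rpow_inv_add_le hα0 hα1 (hw (j + 1)) (hhalf j)

theorem backwardOrbit_sum_sq_le (hα0 : 0 < α) (hα1 : α ≤ 1) (hw : ∀ j, 0 < w j)
    (hrec : ∀ j, Ea α (w (j + 1)) = w j) (hhalf : ∀ j, w (j + 1) ≤ 1 / 2) (hw0 : w 0 ≤ 1)
    (r : ℕ) : ∑ j ∈ range r, ((2 * w (j + 1)) ^ α) ^ 2 ≤ 4 / α := by
  have ht0 : (2 * w 0) ^ α ≤ 2 :=
    calc (2 * w 0) ^ α ≤ 2 ^ α := rpow_le_rpow (by linarith [hw 0]) (by linarith) hα0.le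
      _ ≤ 2 ^ (1 : ℝ) := rpow_le_rpow_of_exponent_le one_le_two hα1
      _ = 2 := rpow_one 2
  calc ∑ j ∈ range r, ((2 * w (j + 1)) ^ α) ^ 2 ≤ (2 * w 0) ^ α / (α / 2) :=
        sum_range_succ_sq_le_of_inv_add_le (half_pos hα0) (fun j => by have := hw j; positivity)
          (backwardOrbit_inv_add_le hα0.le hα1 hw hrec hhalf) r
    _ ≤ 2 / (α / 2) := by gcongr
    _ = 4 / α := by ring

theorem backwardOrbit_one_add_div_two_le (hα0 : 0 ≤ α) (hα1 : α ≤ 1) (hw : ∀ j, 0 < w j)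
    (hrec : ∀ j, Ea α (w (j + 1)) = w j) (hhalf : ∀ j, w (j + 1) ≤ 1 / 2) (r : ℕ) :
    (1 + r * w 0 ^ α * α * 2 ^ α) / 2 ≤ (w 0 / w r) ^ α := by
  have hlin := add_mul_le_of_forall_add_le (backwardOrbit_inv_add_le hα0 hα1 hw hrec hhalf) r
  have ht0 : 0 < (2 * w 0) ^ α := by have := hw 0; positivity
  have hratio : (w 0 / w r) ^ α = (2 * w 0) ^ α * ((2 * w r) ^ α)⁻¹ := by
    rw [← mul_div_mul_left (w 0) (w r) two_ne_zero, div_rpow (by linarith [hw 0])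
      (by linarith [hw r]), div_eq_mul_inv]
  calc (1 + r * w 0 ^ α * α * 2 ^ α) / 2 ≤ 1 + r * (α / 2) * (2 * w 0) ^ α := by
        rw [mul_rpow zero_le_two (hw 0).le]
        have : 0 ≤ r * w 0 ^ α * α * 2 ^ α := by have := hw 0; positivity
        nlinarith
    _ = (2 * w 0) ^ α * (((2 * w 0) ^ α)⁻¹ + r * (α / 2)) := by field_simp
    _ ≤ (w 0 / w r) ^ α := by rw [hratio]; gcongr

theorem backwardOrbit_rpow_le_exp_mul_prod (hα0 : 0 < α) (hα1 : α ≤ 1) (hw : ∀ j, 0 < w j)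
    (hrec : ∀ j, Ea α (w (j + 1)) = w j) (hhalf : ∀ j, w (j + 1) ≤ 1 / 2) (hw0 : w 0 ≤ 1)
    (r : ℕ) : (w 0 / w r) ^ (α + 1) ≤
      exp (16 / α) * ∏ j ∈ range r, (1 + (α + 1) * (2 * w (j + 1)) ^ α) := by
  have htele : ∏ j ∈ range r, (1 + (2 * w (j + 1)) ^ α) = w 0 / w r :=
    prod_range_eq_div_of_eq_mul (fun j => (hw j).ne')
      (fun j => by rw [← hrec j, Ea_eq_mul_one_add α (hw (j + 1)).le]) r
  have hsum := backwardOrbit_sum_sq_le hα0 hα1 hw hrec hhalf hw0 r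
  rw [← htele, ← Real.finsetProd_rpow _ _ (fun j _ => by have := hw (j + 1); positivity)]
  calc ∏ j ∈ range r, (1 + (2 * w (j + 1)) ^ α) ^ (α + 1)
      ≤ ∏ j ∈ range r,
          ((1 + (α + 1) * (2 * w (j + 1)) ^ α) * exp (4 * ((2 * w (j + 1)) ^ α) ^ 2)) :=
        prod_le_prod (fun j _ => by have := hw (j + 1); positivity)
          fun j _ => one_add_rpow_add_one_le_mul_exp hα0.le hα1 (by have := hw (j + 1); positivity)
    _ = exp (4 * ∑ j ∈ range r, ((2 * w (j + 1)) ^ α) ^ 2) *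
          ∏ j ∈ range r, (1 + (α + 1) * (2 * w (j + 1)) ^ α) := by
        rw [prod_mul_distrib, mul_sum, exp_sum, mul_comm]
    _ ≤ exp (16 / α) * ∏ j ∈ range r, (1 + (α + 1) * (2 * w (j + 1)) ^ α) := by
        gcongr
        · exact prod_nonneg fun j _ => by have := hw (j + 1); positivity
        · linarith [show 4 * (4 / α) = 16 / α by ring]

theorem backwardOrbit_inv_prod_le (hα0 : 0 < α) (hα1 : α ≤ 1) (hw : ∀ j, 0 < w j)
    (hrec : ∀ j, Ea α (w (j + 1)) = w j) (hhalf : ∀ j, w (j + 1) ≤ 1 / 2) (hw0 : w 0 ≤ 1)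
    (r : ℕ) : (∏ j ∈ range r, (1 + (α + 1) * (2 * w (j + 1)) ^ α))⁻¹ ≤
      exp (16 / α) * ((1 + r * w 0 ^ α * α * 2 ^ α) / 2) ^ (-(α + 1) / α) := by
  set X := (1 + r * w 0 ^ α * α * 2 ^ α) / 2
  have hX : 0 < X := by have := hw 0; positivity
  have hP : 0 < ∏ j ∈ range r, (1 + (α + 1) * (2 * w (j + 1)) ^ α) :=
    prod_pos fun j _ => by have := hw (j + 1); positivity
  have hXq : X ^ ((α + 1) / α) ≤ (w 0 / w r) ^ (α + 1) := by
    calc X ^ ((α + 1) / α) ≤ ((w 0 / w r) ^ α) ^ ((α + 1) / α) := by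
          gcongr; exact backwardOrbit_one_add_div_two_le hα0.le hα1 hw hrec hhalf r
      _ = (w 0 / w r) ^ (α + 1) := by
          rw [← rpow_mul (div_pos (hw 0) (hw r)).le, mul_div_cancel₀ _ hα0.ne']
  rw [neg_div, rpow_neg hX.le, ← div_eq_mul_inv, le_div_iff₀ (by positivity), inv_mul_eq_div,
    div_le_iff₀ hP]
  exact hXq.trans (backwardOrbit_rpow_le_exp_mul_prod hα0 hα1 hw hrec hhalf hw0 r)

end BackwardOrbit

noncomputable def orbitDerivConst (α : ℝ) : ℝ := exp (16 / α) * (α / 2) ^ (-(α + 1) / α)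

theorem orbitDerivConst_pos {α : ℝ} (hα : 0 < α) : 0 < orbitDerivConst α := by
  unfold orbitDerivConst; positivity

theorem antitoneOn_orbitDerivConst : AntitoneOn orbitDerivConst (Ioc 0 2) := by
  rintro α ⟨hα, -⟩ β ⟨-, hβ⟩ hαβ
  have hβ0 : 0 < β := hα.trans_le hαβ
  have he : -(α + 1) / α ≤ -(β + 1) / β := by
    rw [div_le_div_iff₀ hα hβ0]; nlinarith
  unfold orbitDerivConst
  gcongr exp ?_ * ?_
  · exact div_le_div_of_nonneg_left (by norm_num) hα hαβ
  · calc (β / 2) ^ (-(β + 1) / β) ≤ (α / 2) ^ (-(β + 1) / β) :=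
          rpow_le_rpow_of_nonpos (by positivity) (by linarith)
            (div_nonpos_of_nonpos_of_nonneg (by linarith) hβ0.le)
      _ ≤ (α / 2) ^ (-(α + 1) / α) := rpow_le_rpow_of_exponent_ge (by positivity) (by linarith) he

theorem exp_mul_half_rpow_le_orbitDerivConst_mul {α X : ℝ} (hα0 : 0 < α) (hα1 : α ≤ 1)
    (hX : 0 < X) :
    exp (16 / α) * (X / 2) ^ (-(α + 1) / α) ≤ orbitDerivConst α * X ^ (-(α + 1) / α) := by
  rw [orbitDerivConst, mul_assoc]
  gcongr
  exact rpow_le_rpow_mul_rpow_of_mul_le (half_pos hα0) hX (by nlinarith)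
    (div_nonpos_of_nonpos_of_nonneg (by linarith) hα0.le)

theorem exp_mul_half_rpow_le_orbitDerivConst_mul_rpow_mul_rpow {α z : ℝ} {r : ℕ} (hα0 : 0 < α)
    (hz : 0 < z) (hr : 1 ≤ r) :
    exp (16 / α) * ((1 + r * z ^ α * α * 2 ^ α) / 2) ^ (-(α + 1) / α) ≤
      orbitDerivConst α * (r : ℝ) ^ (-(α + 1) / α) * z ^ (-(α + 1)) := by
  have hr0 : (0 : ℝ) < r := by exact_mod_cast hr
  have he : -(α + 1) / α ≤ 0 := div_nonpos_of_nonpos_of_nonneg (by linarith) hα0.le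
  have hle : α / 2 * (r * z ^ α) ≤ (1 + r * z ^ α * α * 2 ^ α) / 2 := by
    have h2 : 1 ≤ (2 : ℝ) ^ α := one_le_rpow one_le_two hα0.le
    have : 0 ≤ r * z ^ α * α := by positivity
    nlinarith
  have hz' : (z ^ α) ^ (-(α + 1) / α) = z ^ (-(α + 1)) := by
    rw [← rpow_mul hz.le, mul_div_cancel₀ _ hα0.ne']
  calc exp (16 / α) * ((1 + r * z ^ α * α * 2 ^ α) / 2) ^ (-(α + 1) / α)
      ≤ exp (16 / α) * ((α / 2) ^ (-(α + 1) / α) * (r * z ^ α) ^ (-(α + 1) / α)) := by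
        gcongr
        exact rpow_le_rpow_mul_rpow_of_mul_le (half_pos hα0) (by positivity) hle he
    _ = orbitDerivConst α * (r : ℝ) ^ (-(α + 1) / α) * z ^ (-(α + 1)) := by
        rw [mul_rpow hr0.le (by positivity), hz', orbitDerivConst]
        ring

theorem stmt9_general (αm αp : ℝ) (h1 : 0 < αm) (h3 : αp < 1) :
    ∃ C : ℝ, 0 < C ∧
      ∀ α ∈ Set.Icc αm αp, ∀ Z : ℕ → ℝ → ℝ,
        (∀ x ∈ Set.Ioi (0:ℝ), Z 0 x = x) →
        (∀ r : ℕ, ∀ x ∈ Set.Ioi (0:ℝ), Ea α (Z (r + 1) x) = Z r x ∧ 0 < Z (r + 1) x) →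
        (∀ r : ℕ, ∀ x ∈ Set.Ioc (0:ℝ) 1, Z (r + 1) x ≤ 1/2) →
        ∀ z ∈ Set.Ioc (0:ℝ) 1, ∀ r : ℕ, 1 ≤ r →
          0 ≤ deriv (Z r) z ∧
            deriv (Z r) z ≤ C * (1 + r * z ^ α * α * 2 ^ α) ^ (-(α + 1) / α) ∧
            deriv (Z r) z ≤ C * (r : ℝ) ^ (-(α + 1) / α) * z ^ (-(α + 1)) := by
  refine ⟨orbitDerivConst αm, orbitDerivConst_pos h1, ?_⟩
  rintro α ⟨hαm, hαp⟩ Z hZ0 hZ hZhalf z ⟨hz0, hz1⟩ r hr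
  have hα0 : 0 < α := h1.trans_le hαm
  have hα1 : α ≤ 1 := (hαp.trans_lt h3).le
  have hw : ∀ j, 0 < Z j z
    | 0 => by rwa [hZ0 z hz0]
    | j + 1 => (hZ j z hz0).2
  have hbound := backwardOrbit_inv_prod_le hα0 hα1 hw (fun j => (hZ j z hz0).1)
    (fun j => hZhalf j z ⟨hz0, hz1⟩) (by rwa [hZ0 z hz0]) r
  rw [hZ0 z hz0] at hbound
  have hC := antitoneOn_orbitDerivConst ⟨h1, by linarith⟩ ⟨hα0, by linarith⟩ hαm
  rw [(hasDerivAt_of_Ea_backwardOrbit hα0.le hZ0 hZ r hz0).deriv]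
  refine ⟨inv_nonneg.2 (prod_nonneg fun j _ => by have := hw (j + 1); positivity), ?_, ?_⟩
  · calc _ ≤ _ := hbound
      _ ≤ orbitDerivConst α * _ :=
          exp_mul_half_rpow_le_orbitDerivConst_mul hα0 hα1 (by positivity)
      _ ≤ _ := by gcongr
  · calc _ ≤ _ := hbound
      _ ≤ orbitDerivConst α * _ * _ :=
          exp_mul_half_rpow_le_orbitDerivConst_mul_rpow_mul_rpow hα0 hz0 hr
      _ ≤ _ := by gcongr

theorem stmt9 (αm αp : ℝ) (h1 : 0 < αm) (h2 : αm ≤ αp) (h3 : αp < 1) :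
    ∃ C : ℝ, 0 < C ∧
      ∀ α ∈ Set.Icc αm αp, ∀ Z : ℕ → ℝ → ℝ,
        (∀ x ∈ Set.Ioi (0:ℝ), Z 0 x = x) →
        (∀ r : ℕ, ∀ x ∈ Set.Ioi (0:ℝ), Ea α (Z (r + 1) x) = Z r x ∧ 0 < Z (r + 1) x) →
        (∀ r : ℕ, ∀ x ∈ Set.Ioc (0:ℝ) 1, Z (r + 1) x ≤ 1/2) →
        ∀ z ∈ Set.Ioc (0:ℝ) 1, ∀ r : ℕ, 1 ≤ r →
          0 ≤ deriv (Z r) z ∧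
            deriv (Z r) z ≤ C * (1 + r * z ^ α * α * 2 ^ α) ^ (-(α + 1) / α) ∧
            deriv (Z r) z ≤ C * (r : ℝ) ^ (-(α + 1) / α) * z ^ (-(α + 1)) :=
  stmt9_general αm αp h1 h3
end

section
/- Let z_r = z_r(α,z) = E_α^{−r}(z). Then ∂_α z_r ≥ 0 for all r, and for any compact [α₋,α₊] ⊂ (0,1) there is a constant C such that for all r ≥ 1, α ∈ [α₋,α₊], z ∈ (0,1]: (∂_α z_r)/z_r ≤ C·max(1, log(r z^α))·(max(1,log r) − log z), and consequently ∂_α z_r ≤ C·r^{−1/α}·max(1,log(r z^α))·(max(1,log r) − log z). -/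
open Real Filter Set Topology

lemma Ea_eq_mul_one_add_rpow {a y : ℝ} (hy : 0 ≤ y) : Ea a y = y * (1 + (2 * y) ^ a) := by
  rw [Ea, mul_rpow zero_le_two hy]

lemma self_le_Ea {a y : ℝ} (hy : 0 ≤ y) : y ≤ Ea a y := by
  rw [Ea_eq_mul_one_add_rpow hy]
  have : 0 ≤ y * (2 * y) ^ a := by positivity
  linarith

lemma strictMonoOn_Ea_s12 {a : ℝ} (ha : 0 ≤ a) : StrictMonoOn (Ea a) (Ici 0) := by
  intro x hx y hy hxy
  simp only [mem_Ici] at hx hy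
  rw [Ea_eq_mul_one_add_rpow hx, Ea_eq_mul_one_add_rpow hy]
  have : (2 * x) ^ a ≤ (2 * y) ^ a := by gcongr
  have : 0 ≤ (2 * x) ^ a := by positivity
  nlinarith

theorem hasDerivAt_Ea_s12 {f g : ℝ → ℝ} {f' g' t : ℝ} (hf : HasDerivAt f f' t)
    (hg : HasDerivAt g g' t) (hpos : 0 < g t) :
    HasDerivAt (fun t => Ea (f t) (g t))
      (g t * (2 * g t) ^ f t * log (2 * g t) * f' + (1 + (1 + f t) * (2 * g t) ^ f t) * g')
      t := by
  have h2g : 0 < 2 * g t := by positivity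
  have hpow := (hg.const_mul 2).rpow hf h2g
  have hev : (fun t => g t * (1 + (2 * g t) ^ f t)) =ᶠ[𝓝 t] fun t => Ea (f t) (g t) := by
    filter_upwards [hg.continuousAt.eventually (lt_mem_nhds hpos)] with s hs
    rw [Ea_eq_mul_one_add_rpow hs.le]
  refine ((hg.mul (hpow.const_add 1)).congr_of_eventuallyEq hev.symm).congr_deriv ?_
  rw [rpow_sub_one h2g.ne']
  field_simp
  ring

lemma contDiffAt_Ea {a y : ℝ} (hy : 0 < y) :
    ContDiffAt ℝ 1 (fun p : ℝ × ℝ => Ea p.1 p.2) (a, y) := by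
  unfold Ea
  have h1 : ContDiffAt ℝ 1 (fun p : ℝ × ℝ => (2:ℝ) ^ p.1) (a, y) :=
    contDiffAt_const.rpow contDiffAt_fst (by norm_num)
  have h2 : ContDiffAt ℝ 1 (fun p : ℝ × ℝ => p.2 ^ p.1) (a, y) :=
    contDiffAt_snd.rpow contDiffAt_fst hy.ne'
  exact contDiffAt_snd.mul (contDiffAt_const.add (h1.mul h2))

lemma ContinuousLinearMap.isInvertible_of_apply_one_ne_zero {𝕜 : Type*} [NormedField 𝕜]
    {L : 𝕜 →L[𝕜] 𝕜} (hL : L 1 ≠ 0) : L.IsInvertible := by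
  refine .of_inverse (g := (L 1)⁻¹ • ContinuousLinearMap.id 𝕜 𝕜) ?_ ?_ <;>
    ext <;> simp [hL]

lemma differentiableAt_of_Ea_eq {φ ψ : ℝ → ℝ} {α : ℝ} (hα : 0 < α)
    (hψ : DifferentiableAt ℝ ψ α) (hpos : ∀ᶠ a in 𝓝 α, 0 < φ a)
    (heq : ∀ᶠ a in 𝓝 α, Ea a (φ a) = ψ a) : DifferentiableAt ℝ φ α := by
  set F : (ℝ × ℝ) × ℝ → ℝ := fun q => Ea q.1.1 q.2 - q.1.2
  set u : (ℝ × ℝ) × ℝ := ((α, ψ α), φ α)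
  have hy : 0 < φ α := hpos.self_of_nhds
  have hFu : F u = 0 := sub_eq_zero.2 heq.self_of_nhds
  have hF : HasStrictFDerivAt F (fderiv ℝ F u) u := by
    have hcd : ContDiffAt ℝ 1 F u := ((contDiffAt_Ea (a := α) hy).comp u
      (contDiffAt_fst.fst.prodMk contDiffAt_snd)).sub contDiffAt_fst.snd
    exact hcd.hasStrictFDerivAt one_ne_zero
  have hinv : (fderiv ℝ F u ∘L .inr ℝ (ℝ × ℝ) ℝ).IsInvertible := by
    apply ContinuousLinearMap.isInvertible_of_apply_one_ne_zero
    have h1 : HasDerivAt (fun y => F ((α, ψ α), y)) (fderiv ℝ F u (0, 1)) (φ α) :=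
      hF.hasFDerivAt.comp_hasDerivAt _ ((hasDerivAt_const _ _).prodMk (hasDerivAt_id _))
    have h2 :=
      (hasDerivAt_Ea_s12 (hasDerivAt_const (φ α) α) (hasDerivAt_id (φ α)) hy).sub_const (ψ α)
    simp only [ContinuousLinearMap.comp_apply, ContinuousLinearMap.inr_apply]
    rw [h1.unique h2]
    simp only [mul_zero, zero_add, mul_one]
    positivity
  set χ := hF.implicitFunctionOfProdDomain hinv
  have hχ : DifferentiableAt ℝ χ (α, ψ α) :=
    (hF.hasStrictFDerivAt_implicitFunctionOfProdDomain hinv).differentiableAt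
  have hpath : Tendsto (fun a => (a, ψ a)) (𝓝 α) (𝓝 (α, ψ α)) :=
    (continuousAt_id.prodMk hψ.continuousAt).tendsto
  have hχeq := hpath.eventually (hF.eventually_apply_implicitFunctionOfProdDomain hinv)
  have hχpos := hpath.eventually
    ((hF.tendsto_implicitFunctionOfProdDomain hinv).eventually (lt_mem_nhds hy))
  -- `Ea a` is injective on `[0, ∞)`, so the implicit solution is `φ` itself
  have hφχ : (fun a => χ (a, ψ a)) =ᶠ[𝓝 α] φ := by
    filter_upwards [hχeq, hχpos, hpos, heq, lt_mem_nhds hα] with a hχa hχa_pos hφa_pos hφa ha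
    have hEa : Ea a (χ (a, ψ a)) = Ea a (φ a) := (sub_eq_zero.1 (hχa.trans hFu)).trans hφa.symm
    exact (strictMonoOn_Ea_s12 ha.le).injOn (mem_Ici.2 hχa_pos.le) (mem_Ici.2 hφa_pos.le) hEa
  exact (hχ.comp (g := χ) (f := fun a => (a, ψ a)) α
    (differentiableAt_id.prodMk hψ)).congr_of_eventuallyEq hφχ.symm

lemma hasDerivAt_of_Ea_eq {φ ψ : ℝ → ℝ} {α ψ' : ℝ} (hα : 0 < α) (hψ : HasDerivAt ψ ψ' α)
    (hpos : ∀ᶠ a in 𝓝 α, 0 < φ a) (heq : ∀ᶠ a in 𝓝 α, Ea a (φ a) = ψ a) :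
    HasDerivAt φ
      ((ψ' - φ α * (2 * φ α) ^ α * log (2 * φ α)) / (1 + (1 + α) * (2 * φ α) ^ α)) α := by
  have hy : 0 < φ α := hpos.self_of_nhds
  have hφ := (differentiableAt_of_Ea_eq hα hψ.differentiableAt hpos heq).hasDerivAt
  have hcomp := (hasDerivAt_Ea_s12 (hasDerivAt_id α) hφ hy).congr_of_eventuallyEq
    (heq.mono fun _ h => h.symm)
  have hQ : 0 < 1 + (1 + α) * (2 * φ α) ^ α := by positivity
  have hd : (ψ' - φ α * (2 * φ α) ^ α * log (2 * φ α)) / (1 + (1 + α) * (2 * φ α) ^ α) =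
      deriv φ α := by
    rw [div_eq_iff hQ.ne', hψ.unique hcomp]
    simp only [id]
    ring
  rwa [hd]

-- `orbitDeriv α u k` is `∂_α z_k` at `a = α`, where `u k = z_k α`.
noncomputable def orbitDeriv (α : ℝ) (u : ℕ → ℝ) : ℕ → ℝ
  | 0 => 0
  | k + 1 => (orbitDeriv α u k - u (k + 1) * (2 * u (k + 1)) ^ α * log (2 * u (k + 1))) /
      (1 + (1 + α) * (2 * u (k + 1)) ^ α)

lemma hasDerivAt_orbitDeriv {Z : ℕ → ℝ → ℝ} {α : ℝ} (hα : 0 < α)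
    (h0 : ∀ᶠ a in 𝓝 α, Z 0 a = Z 0 α) (hpos : ∀ k, ∀ᶠ a in 𝓝 α, 0 < Z (k + 1) a)
    (hrec : ∀ k, ∀ᶠ a in 𝓝 α, Ea a (Z (k + 1) a) = Z k a) (k : ℕ) :
    HasDerivAt (Z k) (orbitDeriv α (fun k => Z k α) k) α := by
  induction k with
  | zero => exact (hasDerivAt_const α (Z 0 α)).congr_of_eventuallyEq h0
  | succ k ih => exact hasDerivAt_of_Ea_eq hα ih (hpos k) (hrec k)

lemma one_sub_mul_le_one_add_rpow_neg_s12 {p s : ℝ} (hp0 : 0 ≤ p) (hp1 : p ≤ 1) (hs : 0 ≤ s) :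
    1 - p * s ≤ (1 + s) ^ (-p) := by
  have hbern : (1 + s) ^ p ≤ 1 + p * s := rpow_one_add_le_one_add_mul_self (by linarith) hp0 hp1
  have hpos : 0 < (1 + s) ^ p := by positivity
  rw [rpow_neg (by linarith), ← one_div, le_div_iff₀ hpos]
  rcases le_total (p * s) 1 with h | h
  · nlinarith [mul_nonneg hp0 hs]
  · nlinarith

lemma one_add_rpow_neg_le_one_sub_mul_div_two {p s : ℝ} (hp0 : 0 ≤ p) (hp1 : p ≤ 1)
    (hs0 : 0 ≤ s) (hs1 : s ≤ 1) :
    (1 + s) ^ (-p) ≤ 1 - p * s / 2 := by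
  have hbern : (1 + s) ^ (-p + 1) ≤ 1 + (-p + 1) * s :=
    rpow_one_add_le_one_add_mul_self (by linarith) (by linarith) (by linarith)
  rw [rpow_add_one (by positivity)] at hbern
  refine le_of_mul_le_mul_right ?_ (by linarith : (0:ℝ) < 1 + s)
  nlinarith [mul_nonneg (mul_nonneg hp0 hs0) (sub_nonneg.2 hs1)]

lemma rpow_neg_two_mul_Ea_bounds {α y : ℝ} (hα0 : 0 ≤ α) (hα1 : α ≤ 1) (hy0 : 0 < y)
    (hy : y ≤ 1 / 2) :
    (2 * Ea α y) ^ (-α) + α / 2 ≤ (2 * y) ^ (-α) ∧ (2 * y) ^ (-α) ≤ (2 * Ea α y) ^ (-α) + α := by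
  set s := (2 * y) ^ α with hs
  have hs0 : 0 < s := by positivity
  have hs1 : s ≤ 1 := rpow_le_one (by positivity) (by linarith) hα0
  have hEa : (2 * Ea α y) ^ (-α) = s⁻¹ * (1 + s) ^ (-α) := by
    rw [Ea_eq_mul_one_add_rpow hy0.le, ← mul_assoc, mul_rpow (by positivity) (by positivity),
      rpow_neg (by positivity)]
  have hlow := one_add_rpow_neg_le_one_sub_mul_div_two hα0 hα1 hs0.le hs1
  have hup := one_sub_mul_le_one_add_rpow_neg_s12 hα0 hα1 hs0.le
  have h2y : (2 * y) ^ (-α) = s⁻¹ := rpow_neg (by positivity) α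
  rw [hEa, h2y]
  constructor
  · have : s⁻¹ * (α * s / 2) = α / 2 := by field_simp
    nlinarith [inv_pos.2 hs0]
  · have : s⁻¹ * (α * s) = α := by field_simp
    nlinarith [inv_pos.2 hs0]

lemma sum_range_inv_le_log_sub_log {a b : ℝ} (ha : 0 < a) (hb : 0 < b) (r : ℕ) :
    ∑ k ∈ Finset.range r, (a + b * (k + 1))⁻¹ ≤ (log (a + b * r) - log a) / b := by
  induction r with
  | zero => simp
  | succ r ih =>
    have hr : 0 < a + b * r := by positivity
    have hlog := one_sub_inv_le_log_of_pos (div_pos (by positivity : 0 < a + b * (r + 1)) hr)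
    rw [log_div (by positivity) hr.ne', inv_div] at hlog
    have hstep : (a + b * (r + 1))⁻¹ ≤ (log (a + b * (r + 1)) - log (a + b * r)) / b := by
      rw [le_div_iff₀ hb]
      have : 1 - (a + b * r) / (a + b * (r + 1)) = (a + b * (r + 1))⁻¹ * b := by
        field_simp; ring
      linarith
    rw [Finset.sum_range_succ]
    push_cast
    calc _ ≤ (log (a + b * r) - log a) / b + (log (a + b * (r + 1)) - log (a + b * r)) / b :=
          add_le_add ih hstep
      _ = _ := by ring

lemma log_one_add_le_two_mul_max {t : ℝ} (ht : 0 < t) : log (1 + t) ≤ 2 * max 1 (log t) := by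
  have hlog2 : log 2 ≤ 1 := by linarith [log_le_sub_one_of_pos (by norm_num : (0:ℝ) < 2)]
  rcases le_total t 1 with h | h
  · have : log (1 + t) ≤ log 2 := log_le_log (by linarith) (by linarith)
    linarith [le_max_left 1 (log t)]
  · have : log (1 + t) ≤ log 2 + log t := by
      rw [← log_mul two_ne_zero ht.ne']
      exact log_le_log (by linarith) (by linarith)
    linarith [le_max_left 1 (log t), le_max_right 1 (log t)]

noncomputable def backwardOrbitConst (α : ℝ) : ℝ := 8 / α ^ 2 * (2 / α) ^ α⁻¹

lemma one_le_two_div_rpow_inv {α : ℝ} (hα0 : 0 < α) (hα1 : α ≤ 1) : 1 ≤ (2 / α) ^ α⁻¹ :=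
  one_le_rpow (by rw [le_div_iff₀ hα0]; linarith) (by positivity)

lemma backwardOrbitConst_pos {α : ℝ} (hα : 0 < α) : 0 < backwardOrbitConst α := by
  unfold backwardOrbitConst
  positivity

lemma backwardOrbitConst_le_of_le {a b : ℝ} (ha : 0 < a) (hab : a ≤ b) (hb : b ≤ 1) :
    backwardOrbitConst b ≤ backwardOrbitConst a := by
  have hb0 : 0 < b := ha.trans_le hab
  have hpow : (2 / b) ^ b⁻¹ ≤ (2 / a) ^ a⁻¹ :=
    calc (2 / b) ^ b⁻¹ ≤ (2 / a) ^ b⁻¹ := by gcongr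
      _ ≤ (2 / a) ^ a⁻¹ := by
        refine rpow_le_rpow_of_exponent_le ?_ (inv_anti₀ ha hab)
        rw [le_div_iff₀ ha]
        linarith
  unfold backwardOrbitConst
  gcongr

structure IsBackwardOrbit (α : ℝ) (u : ℕ → ℝ) : Prop where
  pos : ∀ k, 0 < u k
  Ea_succ : ∀ k, Ea α (u (k + 1)) = u k
  succ_le_half : ∀ k, u (k + 1) ≤ 1 / 2

namespace IsBackwardOrbit

variable {α : ℝ} {u : ℕ → ℝ}

theorem antitone (h : IsBackwardOrbit α u) : Antitone u :=
  antitone_nat_of_succ_le fun k => h.Ea_succ k ▸ self_le_Ea (h.pos (k + 1)).le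

theorem neg_log_two_mul_succ_nonneg (h : IsBackwardOrbit α u) (k : ℕ) :
    0 ≤ -log (2 * u (k + 1)) := by
  have := h.pos (k + 1)
  have := h.succ_le_half k
  linarith [log_nonpos (by positivity : 0 ≤ 2 * u (k + 1)) (by linarith : 2 * u (k + 1) ≤ 1)]

theorem rpow_neg_bounds (h : IsBackwardOrbit α u) (hα0 : 0 ≤ α) (hα1 : α ≤ 1) (k : ℕ) :
    (2 * u 0) ^ (-α) + α / 2 * k ≤ (2 * u k) ^ (-α) ∧
      (2 * u k) ^ (-α) ≤ (2 * u 0) ^ (-α) + α * k := by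
  induction k with
  | zero => simp
  | succ k ih =>
    have hstep := rpow_neg_two_mul_Ea_bounds hα0 hα1 (h.pos (k + 1)) (h.succ_le_half k)
    rw [h.Ea_succ k] at hstep
    push_cast
    constructor <;> linarith [ih.1, ih.2, hstep.1, hstep.2]

theorem le_rpow (h : IsBackwardOrbit α u) (hα0 : 0 < α) (hα1 : α ≤ 1) {r : ℕ} (hr : 1 ≤ r) :
    u r ≤ (2 / α) ^ α⁻¹ * (r : ℝ) ^ (-1 / α) := by
  have hr0 : (0 : ℝ) < r := by exact_mod_cast hr
  have hur := h.pos r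
  have hlow : α / 2 * r ≤ (2 * u r) ^ (-α) := by
    have := (h.rpow_neg_bounds hα0.le hα1 r).1
    have : 0 ≤ (2 * u 0) ^ (-α) := rpow_nonneg (by linarith [h.pos 0]) _
    linarith
  have hpow : (2 * u r) ^ α ≤ 2 / α * (r : ℝ)⁻¹ := by
    rw [rpow_neg (by positivity)] at hlow
    have := inv_anti₀ (by positivity) hlow
    rwa [inv_inv, mul_inv, inv_div] at this
  calc u r ≤ 2 * u r := by linarith
    _ = ((2 * u r) ^ α) ^ α⁻¹ := (rpow_rpow_inv (by positivity) hα0.ne').symm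
    _ ≤ (2 / α * (r : ℝ)⁻¹) ^ α⁻¹ := by gcongr
    _ = (2 / α) ^ α⁻¹ * (r : ℝ) ^ (-1 / α) := by
      rw [mul_rpow (by positivity) (by positivity), inv_rpow hr0.le, ← rpow_neg hr0.le,
        neg_div, one_div]

theorem sum_rpow_le (h : IsBackwardOrbit α u) (hα0 : 0 < α) (hα1 : α ≤ 1) {r : ℕ}
    (hr : 1 ≤ r) :
    ∑ k ∈ Finset.range r, (2 * u (k + 1)) ^ α ≤ 4 / α * max 1 (log (r * u 0 ^ α)) := by
  have hu0 := h.pos 0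
  have hr0 : (0 : ℝ) < r := by exact_mod_cast hr
  set a := (2 ^ α * u 0 ^ α)⁻¹ with ha
  have ha0 : 0 < a := by positivity
  have hterm : ∀ k : ℕ, (2 * u (k + 1)) ^ α ≤ (a + α / 2 * (k + 1))⁻¹ := by
    intro k
    have hk := (h.rpow_neg_bounds hα0.le hα1 (k + 1)).1
    have := h.pos (k + 1)
    rw [rpow_neg (by positivity), rpow_neg (by positivity), mul_rpow (by norm_num) hu0.le,
      ← ha] at hk
    push_cast at hk
    have := inv_anti₀ (by positivity) hk
    rwa [inv_inv] at this
  have hratio : α / 2 * r / a ≤ r * u 0 ^ α := by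
    have h2 : (2 : ℝ) ^ α ≤ 2 := by
      simpa using rpow_le_rpow_of_exponent_le (by norm_num : (1 : ℝ) ≤ 2) hα1
    rw [ha, div_inv_eq_mul]
    have : 0 ≤ r * u 0 ^ α := by positivity
    nlinarith [mul_le_mul hα1 h2 (by positivity) zero_le_one]
  calc ∑ k ∈ Finset.range r, (2 * u (k + 1)) ^ α
      ≤ ∑ k ∈ Finset.range r, (a + α / 2 * (k + 1))⁻¹ := Finset.sum_le_sum fun k _ => hterm k
    _ ≤ (log (a + α / 2 * r) - log a) / (α / 2) :=
      sum_range_inv_le_log_sub_log ha0 (by positivity) r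
    _ = 2 / α * log (1 + α / 2 * r / a) := by
      rw [← log_div (by positivity) ha0.ne', add_div, div_self ha0.ne']
      ring
    _ ≤ 2 / α * log (1 + r * u 0 ^ α) := by gcongr
    _ ≤ 2 / α * (2 * max 1 (log (r * u 0 ^ α))) := by
      gcongr
      exact log_one_add_le_two_mul_max (by positivity)
    _ = 4 / α * max 1 (log (r * u 0 ^ α)) := by ring

theorem neg_log_two_mul_le (h : IsBackwardOrbit α u) (hα0 : 0 < α) (hα1 : α ≤ 1) (hz : u 0 ≤ 1)
    {r : ℕ} (hr : 1 ≤ r) : -log (2 * u r) ≤ 2 / α * (max 1 (log r) - log (u 0)) := by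
  have hu0 := h.pos 0
  have hur := h.pos r
  have hr1 : (1 : ℝ) ≤ r := by exact_mod_cast hr
  have ha : 1 ≤ u 0 ^ (-α) := one_le_rpow_of_pos_of_le_one_of_nonpos hu0 hz (by linarith)
  have h2 : (2 * u 0) ^ (-α) ≤ u 0 ^ (-α) := by
    rw [mul_rpow zero_le_two hu0.le]
    have : (2 : ℝ) ^ (-α) ≤ 1 := rpow_le_one_of_one_le_of_nonpos one_le_two (by linarith)
    nlinarith
  have hup : (2 * u r) ^ (-α) ≤ 2 * u 0 ^ (-α) * r := by
    nlinarith [(h.rpow_neg_bounds hα0.le hα1 r).2,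
      mul_nonneg (sub_nonneg.2 ha) (sub_nonneg.2 hr1)]
  have hlog : -α * log (2 * u r) ≤ log 2 + -α * log (u 0) + log r := by
    rw [← log_rpow (by positivity), ← log_rpow hu0, ← log_mul two_ne_zero (by positivity),
      ← log_mul (by positivity) (by positivity)]
    exact log_le_log (by positivity) hup
  have hlogu0 : log (u 0) ≤ 0 := log_nonpos hu0.le hz
  have hlog2 : log 2 ≤ 1 := by linarith [log_le_sub_one_of_pos (by norm_num : (0:ℝ) < 2)]
  rw [div_mul_eq_mul_div, le_div_iff₀ hα0]
  nlinarith [le_max_left 1 (log (r : ℝ)), le_max_right 1 (log (r : ℝ)),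
    mul_nonneg (by linarith : 0 ≤ 2 - α) (neg_nonneg.2 hlogu0)]

theorem orbitDeriv_nonneg (h : IsBackwardOrbit α u) (hα : 0 ≤ α) (k : ℕ) :
    0 ≤ orbitDeriv α u k := by
  induction k with
  | zero => rfl
  | succ k ih =>
    have hy := h.pos (k + 1)
    rw [orbitDeriv]
    apply div_nonneg _ (by positivity)
    have hs : 0 ≤ (2 * u (k + 1)) ^ α := by positivity
    nlinarith [mul_nonneg (mul_nonneg hy.le hs) (h.neg_log_two_mul_succ_nonneg k)]

theorem orbitDeriv_succ_div_le (h : IsBackwardOrbit α u) (hα : 0 ≤ α) (k : ℕ) :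
    orbitDeriv α u (k + 1) / u (k + 1) ≤
      orbitDeriv α u k / u k + (2 * u (k + 1)) ^ α * -log (2 * u (k + 1)) := by
  set y := u (k + 1)
  set s := (2 * y) ^ α
  set ℓ := -log (2 * y)
  set R := orbitDeriv α u k / u k
  have hy : 0 < y := h.pos (k + 1)
  have hs : 0 ≤ s := by positivity
  have hℓ : 0 ≤ ℓ := h.neg_log_two_mul_succ_nonneg k
  have hR : 0 ≤ R := div_nonneg (h.orbitDeriv_nonneg hα k) (h.pos k).le
  have hD : orbitDeriv α u k = R * (y * (1 + s)) := by
    rw [← Ea_eq_mul_one_add_rpow hy.le, h.Ea_succ k, div_mul_cancel₀ _ (h.pos k).ne']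
  have hQ : 0 < 1 + (1 + α) * s := by positivity
  rw [orbitDeriv, hD, div_div, div_le_iff₀ (by positivity)]
  nlinarith [mul_nonneg (mul_nonneg (mul_nonneg hR hy.le) hα) hs,
    mul_nonneg (mul_nonneg (mul_nonneg (mul_nonneg hy.le hs) hℓ) (by linarith : 0 ≤ 1 + α)) hs]

theorem orbitDeriv_div_le_sum (h : IsBackwardOrbit α u) (hα : 0 ≤ α) (r : ℕ) :
    orbitDeriv α u r / u r ≤
      ∑ k ∈ Finset.range r, (2 * u (k + 1)) ^ α * -log (2 * u (k + 1)) := by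
  induction r with
  | zero => simp [orbitDeriv]
  | succ r ih =>
    rw [Finset.sum_range_succ]
    linarith [h.orbitDeriv_succ_div_le hα r]

theorem orbitDeriv_div_le (h : IsBackwardOrbit α u) (hα0 : 0 < α) (hα1 : α ≤ 1) (hz : u 0 ≤ 1)
    {r : ℕ} (hr : 1 ≤ r) :
    orbitDeriv α u r / u r ≤
      8 / α ^ 2 * max 1 (log (r * u 0 ^ α)) * (max 1 (log r) - log (u 0)) := by
  obtain ⟨m, rfl⟩ : ∃ m, r = m + 1 := ⟨r - 1, by omega⟩
  have hℓ := h.neg_log_two_mul_succ_nonneg m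
  calc orbitDeriv α u (m + 1) / u (m + 1)
      ≤ ∑ k ∈ Finset.range (m + 1), (2 * u (k + 1)) ^ α * -log (2 * u (k + 1)) :=
        h.orbitDeriv_div_le_sum hα0.le (m + 1)
    _ ≤ ∑ k ∈ Finset.range (m + 1), (2 * u (k + 1)) ^ α * -log (2 * u (m + 1)) := by
      refine Finset.sum_le_sum fun k hk => ?_
      have hle : u (m + 1) ≤ u (k + 1) := h.antitone (by simpa using hk)
      have := h.pos (m + 1)
      have := h.pos (k + 1)
      gcongr
    _ = (∑ k ∈ Finset.range (m + 1), (2 * u (k + 1)) ^ α) * -log (2 * u (m + 1)) :=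
      (Finset.sum_mul ..).symm
    _ ≤ (4 / α * max 1 (log ((m + 1 : ℕ) * u 0 ^ α))) *
          (2 / α * (max 1 (log (m + 1 : ℕ)) - log (u 0))) := by
      gcongr
      · exact h.sum_rpow_le hα0 hα1 hr
      · exact h.neg_log_two_mul_le hα0 hα1 hz hr
    _ = _ := by ring

theorem orbitDeriv_bounds (h : IsBackwardOrbit α u) (hα0 : 0 < α) (hα1 : α ≤ 1) (hz : u 0 ≤ 1)
    {r : ℕ} (hr : 1 ≤ r) :
    orbitDeriv α u r / u r ≤
        backwardOrbitConst α * max 1 (log (r * u 0 ^ α)) * (max 1 (log r) - log (u 0)) ∧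
      orbitDeriv α u r ≤ backwardOrbitConst α * (r : ℝ) ^ (-1 / α) *
        max 1 (log (r * u 0 ^ α)) * (max 1 (log r) - log (u 0)) := by
  have hratio := h.orbitDeriv_div_le hα0 hα1 hz hr
  have hL : 0 ≤ max 1 (log (r * u 0 ^ α)) := zero_le_one.trans (le_max_left _ _)
  have hM : 0 ≤ max 1 (log r) - log (u 0) := by
    linarith [le_max_left 1 (log (r : ℝ)), log_nonpos (h.pos 0).le hz]
  have hur := h.pos r
  unfold backwardOrbitConst
  constructor
  · refine hratio.trans ?_
    gcongr
    exact le_mul_of_one_le_right (by positivity) (one_le_two_div_rpow_inv hα0 hα1)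
  · calc orbitDeriv α u r = orbitDeriv α u r / u r * u r := (div_mul_cancel₀ _ hur.ne').symm
      _ ≤ 8 / α ^ 2 * max 1 (log (r * u 0 ^ α)) * (max 1 (log r) - log (u 0)) *
            ((2 / α) ^ α⁻¹ * (r : ℝ) ^ (-1 / α)) :=
          mul_le_mul hratio (h.le_rpow hα0 hα1 hr) hur.le (by positivity)
      _ = _ := by ring

end IsBackwardOrbit

theorem stmt12_general (αm αp : ℝ) (h1 : 0 < αm) (h3 : αp < 1) :
    ∃ C : ℝ, 0 < C ∧
      ∀ Z : ℕ → ℝ → ℝ → ℝ,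
        (∀ a ∈ Set.Ioo (0:ℝ) 1, ∀ x ∈ Set.Ioi (0:ℝ), Z 0 a x = x) →
        (∀ a ∈ Set.Ioo (0:ℝ) 1, ∀ r : ℕ, ∀ x ∈ Set.Ioi (0:ℝ),
          Ea a (Z (r + 1) a x) = Z r a x ∧ 0 < Z (r + 1) a x) →
        (∀ a ∈ Set.Ioo (0:ℝ) 1, ∀ r : ℕ, ∀ x ∈ Set.Ioc (0:ℝ) 1, Z (r + 1) a x ≤ 1/2) →
        ∀ α ∈ Set.Icc αm αp, ∀ z ∈ Set.Ioc (0:ℝ) 1,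
          (∀ r : ℕ, 0 ≤ deriv (fun a => Z r a z) α) ∧
          ∀ r : ℕ, 1 ≤ r →
            deriv (fun a => Z r a z) α / Z r α z ≤
              C * max 1 (Real.log (r * z ^ α)) * (max 1 (Real.log r) - Real.log z) ∧
            deriv (fun a => Z r a z) α ≤
              C * (r : ℝ) ^ (-1 / α) * max 1 (Real.log (r * z ^ α)) *
                (max 1 (Real.log r) - Real.log z) := by
  refine ⟨backwardOrbitConst αm, backwardOrbitConst_pos h1, ?_⟩
  intro Z hZ0 hZrec hZhalf α hα z hz
  have hαI : α ∈ Set.Ioo (0:ℝ) 1 := ⟨h1.trans_le hα.1, hα.2.trans_lt h3⟩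
  have hnhds : ∀ᶠ a in 𝓝 α, a ∈ Set.Ioo (0:ℝ) 1 := isOpen_Ioo.mem_nhds hαI
  have hu0 : Z 0 α z = z := hZ0 α hαI z hz.1
  have horbit : IsBackwardOrbit α (fun k => Z k α z) :=
    { pos := by
        rintro (_ | k)
        · exact hz.1.trans_eq hu0.symm
        · exact (hZrec α hαI k z hz.1).2
      Ea_succ := fun k => (hZrec α hαI k z hz.1).1
      succ_le_half := fun k => hZhalf α hαI k z hz }
  have hderiv (r : ℕ) : deriv (fun a => Z r a z) α = orbitDeriv α (fun k => Z k α z) r := by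
    refine (hasDerivAt_orbitDeriv (Z := fun k a => Z k a z) hαI.1 ?_ (fun k => ?_) (fun k => ?_)
      r).deriv
    · filter_upwards [hnhds] with a ha using (hZ0 a ha z hz.1).trans hu0.symm
    · filter_upwards [hnhds] with a ha using (hZrec a ha k z hz.1).2
    · filter_upwards [hnhds] with a ha using (hZrec a ha k z hz.1).1
  refine ⟨fun r => hderiv r ▸ horbit.orbitDeriv_nonneg hαI.1.le r, fun r hr => ?_⟩
  obtain ⟨hratio, hbound⟩ := horbit.orbitDeriv_bounds hαI.1 hαI.2.le (hu0.le.trans hz.2) hr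
  simp only [hu0] at hratio hbound
  have hC := backwardOrbitConst_le_of_le h1 hα.1 hαI.2.le
  have hL : 0 ≤ max 1 (log (r * z ^ α)) := zero_le_one.trans (le_max_left _ _)
  have hM : 0 ≤ max 1 (log r) - log z := by
    linarith [le_max_left 1 (log (r : ℝ)), log_nonpos hz.1.le hz.2]
  rw [hderiv r]
  exact ⟨hratio.trans (by gcongr), hbound.trans (by gcongr)⟩

theorem stmt12 (αm αp : ℝ) (h1 : 0 < αm) (h2 : αm ≤ αp) (h3 : αp < 1) :
    ∃ C : ℝ, 0 < C ∧
      ∀ Z : ℕ → ℝ → ℝ → ℝ,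
        (∀ a ∈ Set.Ioo (0:ℝ) 1, ∀ x ∈ Set.Ioi (0:ℝ), Z 0 a x = x) →
        (∀ a ∈ Set.Ioo (0:ℝ) 1, ∀ r : ℕ, ∀ x ∈ Set.Ioi (0:ℝ),
          Ea a (Z (r + 1) a x) = Z r a x ∧ 0 < Z (r + 1) a x) →
        (∀ a ∈ Set.Ioo (0:ℝ) 1, ∀ r : ℕ, ∀ x ∈ Set.Ioc (0:ℝ) 1, Z (r + 1) a x ≤ 1/2) →
        ∀ α ∈ Set.Icc αm αp, ∀ z ∈ Set.Ioc (0:ℝ) 1,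
          (∀ r : ℕ, 0 ≤ deriv (fun a => Z r a z) α) ∧
          ∀ r : ℕ, 1 ≤ r →
            deriv (fun a => Z r a z) α / Z r α z ≤
              C * max 1 (Real.log (r * z ^ α)) * (max 1 (Real.log r) - Real.log z) ∧
            deriv (fun a => Z r a z) α ≤
              C * (r : ℝ) ^ (-1 / α) * max 1 (Real.log (r * z ^ α)) *
                (max 1 (Real.log r) - Real.log z) :=
  stmt12_general αm αp h1 h3
end

section
/- Let P be a positivity-preserving linear operator on C¹(I) with ∫ Ph dm = ∫ h dm, satisfying the distortion bound ‖(Ph)'/(Ph)‖_∞ ≤ σ‖h'/h‖_∞ + K₀ with σ < 1, and let K_L, θ satisfy K_L(1 − θ e^{|I|K_L}) > σK_L + K₀. If h ∈ C¹(I) is positive with ‖h'/h‖_∞ ≤ K_L, then g := Ph − θ·∫h dm is positive and satisfies ‖g'/g‖_∞ ≤ K_L. -/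
open MeasureTheory Set

/-!
The distortion bound applied to `h` gives `|(Ph)'| ≤ (σ K_L + K₀) Ph ≤ K_L Ph`, so `log Ph` is
`K_L`-Lipschitz and, by the Harnack inequality, `∫ h dm = ∫ Ph dm ≤ e^{|I| K_L} Ph` pointwise.
Subtracting `θ ∫ h dm` therefore costs at most the fraction `θ e^{|I| K_L}` of `Ph`, which is
exactly the room left by the hypothesis `K_L (1 - θ e^{|I| K_L}) > σ K_L + K₀`.
-/

lemma abs_log_sub_log_le_of_abs_deriv_le_mul {f : ℝ → ℝ} {a b K : ℝ}
    (hf : ContinuousOn f (Icc a b)) (hf' : DifferentiableOn ℝ f (Ioo a b))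
    (hpos : ∀ x ∈ Icc a b, 0 < f x) (hd : ∀ x ∈ Ioo a b, |deriv f x| ≤ K * f x)
    {x y : ℝ} (hx : x ∈ Icc a b) (hy : y ∈ Icc a b) :
    |Real.log (f y) - Real.log (f x)| ≤ K * |y - x| := by
  wlog hxy : x ≤ y generalizing x y
  · rw [abs_sub_comm, abs_sub_comm y]
    exact this hy hx (le_of_not_ge hxy)
  have hlog_cont : ContinuousOn (fun t => Real.log (f t)) (Icc a b) :=
    hf.log fun t ht => (hpos t ht).ne'
  have hlog_diff : DifferentiableOn ℝ (fun t => Real.log (f t)) (interior (Icc a b)) := by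
    rw [interior_Icc]
    exact hf'.log fun t ht => (hpos t (Ioo_subset_Icc_self ht)).ne'
  have hlog_deriv : ∀ t ∈ interior (Icc a b), |deriv (fun t => Real.log (f t)) t| ≤ K := by
    rw [interior_Icc]
    intro t ht
    have hft := hpos t (Ioo_subset_Icc_self ht)
    rw [deriv.log ((hf' t ht).differentiableAt (Ioo_mem_nhds ht.1 ht.2)) hft.ne', abs_div,
      abs_of_pos hft, div_le_iff₀ hft]
    exact hd t ht
  have hupper := (convex_Icc a b).image_sub_le_mul_sub_of_deriv_le hlog_cont hlog_diff
    (fun t ht => (le_abs_self _).trans (hlog_deriv t ht)) x hx y hy hxy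
  have hlower := (convex_Icc a b).mul_sub_le_image_sub_of_le_deriv hlog_cont hlog_diff
    (fun t ht => neg_le_of_abs_le (hlog_deriv t ht)) x hx y hy hxy
  rw [abs_of_nonneg (sub_nonneg.2 hxy), abs_le]
  constructor <;> linarith

lemma le_exp_mul_of_abs_deriv_le_mul {f : ℝ → ℝ} {a b K : ℝ} (hK : 0 ≤ K)
    (hf : ContinuousOn f (Icc a b)) (hf' : DifferentiableOn ℝ f (Ioo a b))
    (hpos : ∀ x ∈ Icc a b, 0 < f x) (hd : ∀ x ∈ Ioo a b, |deriv f x| ≤ K * f x)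
    {x y : ℝ} (hx : x ∈ Icc a b) (hy : y ∈ Icc a b) :
    f y ≤ Real.exp ((b - a) * K) * f x := by
  have hyx : |y - x| ≤ b - a :=
    abs_sub_le_iff.2 ⟨by linarith [hy.2, hx.1], by linarith [hx.2, hy.1]⟩
  have hlog : Real.log (f y) - Real.log (f x) ≤ (b - a) * K :=
    calc Real.log (f y) - Real.log (f x)
        ≤ K * |y - x| := (le_abs_self _).trans
          (abs_log_sub_log_le_of_abs_deriv_le_mul hf hf' hpos hd hx hy)
      _ ≤ (b - a) * K := by rw [mul_comm]; exact mul_le_mul_of_nonneg_right hyx hK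
  calc f y = Real.exp (Real.log (f y)) := (Real.exp_log (hpos y hy)).symm
    _ ≤ Real.exp ((b - a) * K + Real.log (f x)) := Real.exp_le_exp.2 (by linarith)
    _ = Real.exp ((b - a) * K) * f x := by rw [Real.exp_add, Real.exp_log (hpos x hx)]

lemma exists_mem_Icc_setAverage_le {f : ℝ → ℝ} {a b : ℝ} (hab : a < b)
    (hf : IntegrableOn f (Icc a b)) : ∃ x ∈ Icc a b, ⨍ y in Icc a b, f y ≤ f x := by
  have hμ : volume.restrict (Icc a b) ≠ 0 := by
    rw [Ne, Measure.restrict_eq_zero, Real.volume_Icc]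
    exact (ENNReal.ofReal_pos.2 (sub_pos.2 hab)).ne'
  have hcompl : volume.restrict (Icc a b) (Icc a b)ᶜ = 0 := by
    rw [Measure.restrict_apply measurableSet_Icc.compl, compl_inter_self, measure_empty]
  obtain ⟨x, hx, hle⟩ := exists_notMem_null_average_le hμ hf hcompl
  exact ⟨x, not_not.1 hx, hle⟩

theorem stmt17_general (a b σ K₀ K_L θ : ℝ) (hab : a < b)
    (hσ0 : 0 < σ) (hK₀ : 0 < K₀) (hKL : 0 < K_L)
    (hθ : θ ∈ Set.Ioo (0:ℝ) 1)
    (hcond : K_L * (1 - θ * Real.exp ((b - a) * K_L)) > σ * K_L + K₀)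
    (P : (ℝ → ℝ) → (ℝ → ℝ))
    (hposP : ∀ f : ℝ → ℝ, (∀ x ∈ Set.Icc a b, 0 < f x) →
      ∀ x ∈ Set.Icc a b, 0 < P f x)
    (hsmooth : ∀ f : ℝ → ℝ, ContDiffOn ℝ 1 f (Set.Icc a b) →
      ContDiffOn ℝ 1 (P f) (Set.Icc a b))
    (hmean : ∀ f : ℝ → ℝ, ContDiffOn ℝ 1 f (Set.Icc a b) →
      ⨍ x in Set.Icc a b, P f x = ⨍ x in Set.Icc a b, f x)
    (hdist : ∀ (f : ℝ → ℝ) (L : ℝ), ContDiffOn ℝ 1 f (Set.Icc a b) →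
      (∀ x ∈ Set.Icc a b, 0 < f x) →
      (∀ x ∈ Set.Icc a b, |deriv f x| ≤ L * f x) →
      ∀ x ∈ Set.Icc a b, |deriv (P f) x| ≤ (σ * L + K₀) * P f x)
    (h : ℝ → ℝ) (hC1 : ContDiffOn ℝ 1 h (Set.Icc a b))
    (hpos : ∀ x ∈ Set.Icc a b, 0 < h x)
    (hlog : ∀ x ∈ Set.Icc a b, |deriv h x| ≤ K_L * h x) :
    (∀ x ∈ Set.Icc a b, 0 < P h x - θ * ⨍ y in Set.Icc a b, h y) ∧
      ∀ x ∈ Set.Icc a b,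
        |deriv (fun x => P h x - θ * ⨍ y in Set.Icc a b, h y) x| ≤
          K_L * (P h x - θ * ⨍ y in Set.Icc a b, h y) := by
  set e := Real.exp ((b - a) * K_L)
  set A := ⨍ y in Icc a b, h y
  have hθe : 0 < θ * e := mul_pos hθ.1 (Real.exp_pos _)
  have hθe_lt : θ * e < 1 := by nlinarith [mul_pos hσ0 hKL]
  have hdist_le : σ * K_L + K₀ ≤ K_L := by nlinarith [mul_pos hKL hθe]
  have hPh_pos := hposP h hpos
  have hPh_dist := hdist h K_L hC1 hpos hlog
  have hPh_C1 := hsmooth h hC1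
  have hA_le : ∀ x ∈ Icc a b, θ * A ≤ θ * e * P h x := by
    intro x hx
    obtain ⟨y, hy, hAy⟩ := exists_mem_Icc_setAverage_le hab hPh_C1.continuousOn.integrableOn_Icc
    rw [hmean h hC1] at hAy
    have harnack := le_exp_mul_of_abs_deriv_le_mul hKL.le hPh_C1.continuousOn
      ((hPh_C1.differentiableOn one_ne_zero).mono Ioo_subset_Icc_self) hPh_pos
      (fun z hz => (hPh_dist z (Ioo_subset_Icc_self hz)).trans
        (mul_le_mul_of_nonneg_right hdist_le (hPh_pos z (Ioo_subset_Icc_self hz)).le)) hx hy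
    rw [mul_assoc]
    exact mul_le_mul_of_nonneg_left (hAy.trans harnack) hθ.1.le
  refine ⟨fun x hx => by nlinarith [hA_le x hx, hPh_pos x hx], fun x hx => ?_⟩
  rw [deriv_sub_const]
  have hcond_Ph := mul_le_mul_of_nonneg_right hcond.le (hPh_pos x hx).le
  nlinarith [hPh_dist x hx, hA_le x hx]

/-- Coupling step: if `P` is a positivity-preserving linear operator preserving the
mean and satisfying the distortion bound, and `K_L (1 - θ e^{|I|K_L}) > σ K_L + K₀`,
then for regular `h` the function `g = Ph - θ ∫ h dm` is positive and regular. -/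
theorem stmt17 (a b σ K₀ K_L θ : ℝ) (hab : a < b)
    (hσ0 : 0 < σ) (hσ1 : σ < 1) (hK₀ : 0 < K₀) (hKL : 0 < K_L)
    (hθ : θ ∈ Set.Ioo (0:ℝ) 1)
    (hcond : K_L * (1 - θ * Real.exp ((b - a) * K_L)) > σ * K_L + K₀)
    (P : (ℝ → ℝ) → (ℝ → ℝ))
    (hlin : ∀ (f g : ℝ → ℝ) (c : ℝ),
      P (fun x => c * f x + g x) = fun x => c * P f x + P g x)
    (hposP : ∀ f : ℝ → ℝ, (∀ x ∈ Set.Icc a b, 0 < f x) →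
      ∀ x ∈ Set.Icc a b, 0 < P f x)
    (hsmooth : ∀ f : ℝ → ℝ, ContDiffOn ℝ 1 f (Set.Icc a b) →
      ContDiffOn ℝ 1 (P f) (Set.Icc a b))
    (hmean : ∀ f : ℝ → ℝ, ContDiffOn ℝ 1 f (Set.Icc a b) →
      ⨍ x in Set.Icc a b, P f x = ⨍ x in Set.Icc a b, f x)
    (hdist : ∀ (f : ℝ → ℝ) (L : ℝ), ContDiffOn ℝ 1 f (Set.Icc a b) →
      (∀ x ∈ Set.Icc a b, 0 < f x) →
      (∀ x ∈ Set.Icc a b, |deriv f x| ≤ L * f x) →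
      ∀ x ∈ Set.Icc a b, |deriv (P f) x| ≤ (σ * L + K₀) * P f x)
    (h : ℝ → ℝ) (hC1 : ContDiffOn ℝ 1 h (Set.Icc a b))
    (hpos : ∀ x ∈ Set.Icc a b, 0 < h x)
    (hlog : ∀ x ∈ Set.Icc a b, |deriv h x| ≤ K_L * h x) :
    (∀ x ∈ Set.Icc a b, 0 < P h x - θ * ⨍ y in Set.Icc a b, h y) ∧
      ∀ x ∈ Set.Icc a b,
        |deriv (fun x => P h x - θ * ⨍ y in Set.Icc a b, h y) x| ≤
          K_L * (P h x - θ * ⨍ y in Set.Icc a b, h y) :=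
  stmt17_general a b σ K₀ K_L θ hab hσ0 hK₀ hKL hθ hcond P hposP hsmooth hmean hdist h hC1 hpos hlog
end
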